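/- arXiv:0912.5389 — 10 statements merged into one kernel-verified Lean document; each statement's English description precedes it below -/
import Mathlib

section
/- For any separable Banach space X, the set L_pb(X) of power-bounded operators on X is a Borel set in L(X) equipped with the σ-algebra σ(S_op) generated by the strong operator topology. -/
open Filter Topology

/-- The `n`-th Cesàro mean `A_n = (1/n) ∑_{k<n} T^k` of an operator `T`. -/
noncomputable def cesaroMean {X : Type*} [NormedAddCommGroup X] [NormedSpace ℝ X]
    (T : X →L[ℝ] X) (n : ℕ) : X →L[ℝ] X :=
  (n : ℝ)⁻¹ • ∑ k ∈ Finset.range n, T ^ k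

/-- The strong operator topology on `L(X)`: the topology of pointwise convergence,
induced from the product topology on `X → X`. -/
def sot (X : Type*) [NormedAddCommGroup X] [NormedSpace ℝ X] : TopologicalSpace (X →L[ℝ] X) :=
  TopologicalSpace.induced (fun T => (T : X → X)) Pi.topologicalSpace

/-- `T` is Cesàro-bounded if the norms of its Cesàro means are uniformly bounded. -/
def CesaroBounded {X : Type*} [NormedAddCommGroup X] [NormedSpace ℝ X]
    (T : X →L[ℝ] X) : Prop :=
  ∃ M : ℝ, ∀ n : ℕ, ‖cesaroMean T n‖ ≤ M

/-- `T` is ergodic if for every `x` the sequence of Cesàro means at `x` converges in norm. -/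
def IsErgodicOp {X : Type*} [NormedAddCommGroup X] [NormedSpace ℝ X]
    (T : X →L[ℝ] X) : Prop :=
  ∀ x : X, ∃ y : X, Tendsto (fun n => cesaroMean T n x) atTop (𝓝 y)

/-- `T` is uniformly ergodic if the sequence of Cesàro means converges in operator norm. -/
def IsUniformlyErgodicOp {X : Type*} [NormedAddCommGroup X] [NormedSpace ℝ X]
    (T : X →L[ℝ] X) : Prop :=
  ∃ L : X →L[ℝ] X, Tendsto (fun n => cesaroMean T n) atTop (𝓝 L)

/-- Condition (NSE): there are `ε > 0` and a strictly increasing sequence `j` such that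
for every `m` some `x` in the unit ball satisfies `‖A_{j_p} x - A_{j_{p+1}} x‖ > ε`
for all `p ≤ m`. -/
def NSE {X : Type*} [NormedAddCommGroup X] [NormedSpace ℝ X]
    (T : X →L[ℝ] X) : Prop :=
  ∃ ε > (0 : ℝ), ∃ j : ℕ → ℕ, StrictMono j ∧
    ∀ m : ℕ, ∃ x : X, ‖x‖ ≤ 1 ∧
      ∀ p ≤ m, ε < ‖cesaroMean T (j p) x - cesaroMean T (j (p + 1)) x‖

/-- The tree `𝒜_e(T, ε)`: finite strictly increasing sequences `s` of naturals such that
`|s| ≤ 1` or some `x` in the unit ball satisfies `‖A_{s_p} x - A_{s_{p+1}} x‖ > ε`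
for all consecutive pairs of entries of `s`. -/
def ergoTree {X : Type*} [NormedAddCommGroup X] [NormedSpace ℝ X]
    (T : X →L[ℝ] X) (ε : ℝ) : Set (List ℕ) :=
  {s | s.Chain' (· < ·) ∧ (s.length ≤ 1 ∨ ∃ x : X, ‖x‖ ≤ 1 ∧
    ∀ p : ℕ, p + 1 < s.length →
      ε < ‖cesaroMean T (s.getD p 0) x - cesaroMean T (s.getD (p + 1) 0) x‖)}

/-- A tree on `ℕ` (a set of finite sequences) is well-founded if it has no infinite branch. -/
def TreeWF (𝒜 : Set (List ℕ)) : Prop :=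
  ¬ ∃ J : ℕ → ℕ, ∀ m : ℕ, (List.range m).map J ∈ 𝒜

/-- The relation "is a proper extension of", restricted to the nodes of the tree `𝒜`. -/
def treeRel (𝒜 : Set (List ℕ)) : List ℕ → List ℕ → Prop :=
  fun t s => s ∈ 𝒜 ∧ t ∈ 𝒜 ∧ s <+: t ∧ s ≠ t

open Classical in
/-- The height of a well-founded tree: the ordinal rank of the relation
"is a proper extension of" on its nodes, evaluated at the empty sequence
(and `0` by convention if that relation is not well-founded). -/
noncomputable def treeHeight (𝒜 : Set (List ℕ)) : Ordinal :=
  if h : WellFounded (treeRel 𝒜) then (h.apply []).rank else 0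

/-!
The set of power-bounded operators is the countable union over `m : ℕ` of the sets
`{T | ∀ n, ‖T ^ n‖ ≤ m}`, so it suffices that each of these is closed in the strong operator
topology. The closed ball of radius `m` is SOT-closed, and although composition is not jointly
SOT-continuous, it is so on norm-bounded sets; hence `T ↦ T ^ n` is SOT-continuous on that ball.
-/

open Metric

namespace ContinuousLinearMap

variable {𝕜 E F G ι : Type*} [NontriviallyNormedField 𝕜]
  [NormedAddCommGroup E] [NormedSpace 𝕜 E] [NormedAddCommGroup F] [NormedSpace 𝕜 F]
  [NormedAddCommGroup G] [NormedSpace 𝕜 G] {l : Filter ι}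

theorem tendsto_comp_apply_of_eventually_norm_le {f : ι → F →L[𝕜] G} {g : ι → E →L[𝕜] F}
    {a : F →L[𝕜] G} {b : E →L[𝕜] F} {C : ℝ} (hC : ∀ᶠ i in l, ‖f i‖ ≤ C)
    (hf : ∀ y, Tendsto (fun i => f i y) l (𝓝 (a y)))
    (hg : ∀ x, Tendsto (fun i => g i x) l (𝓝 (b x))) (x : E) :
    Tendsto (fun i => (f i ∘L g i) x) l (𝓝 ((a ∘L b) x)) := by
  have hdiff : Tendsto (fun i => ‖g i x - b x‖) l (𝓝 0) := by
    simpa using ((hg x).sub_const (b x)).norm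
  have herr : Tendsto (fun i => f i (g i x - b x)) l (𝓝 0) := by
    refine squeeze_zero_norm' ?_ (by simpa using hdiff.const_mul C)
    filter_upwards [hC] with i hi
    exact (f i).le_of_opNorm_le hi _
  simpa using herr.add (hf (b x))

theorem tendsto_pow_apply_of_eventually_norm_le {f : ι → E →L[𝕜] E} {a : E →L[𝕜] E} {C : ℝ}
    (hC : ∀ᶠ i in l, ‖f i‖ ≤ C) (hf : ∀ x, Tendsto (fun i => f i x) l (𝓝 (a x))) (n : ℕ)
    (x : E) : Tendsto (fun i => (f i ^ n) x) l (𝓝 ((a ^ n) x)) := by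
  induction n generalizing x with
  | zero => simpa using tendsto_const_nhds
  | succ n ih =>
    simp only [pow_succ']
    exact tendsto_comp_apply_of_eventually_norm_le hC hf ih x

end ContinuousLinearMap

section StrongOperatorTopology

variable {X ι : Type*} [NormedAddCommGroup X] [NormedSpace ℝ X]

theorem tendsto_sot_iff {l : Filter ι} {f : ι → X →L[ℝ] X} {a : X →L[ℝ] X} :
    Tendsto f l (@nhds _ (sot X) a) ↔ ∀ x, Tendsto (fun i => f i x) l (𝓝 (a x)) := by
  unfold sot
  rw [nhds_induced, tendsto_comap_iff, tendsto_pi_nhds]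
  rfl

theorem isClosed_closedBall_sot (M : ℝ) : @IsClosed _ (sot X) (closedBall (0 : X →L[ℝ] X) M) :=
  isClosed_induced_iff.mpr ⟨_, ContinuousLinearMap.isClosed_image_coe_closedBall 0 M,
    DFunLike.coe_injective.preimage_image _⟩

theorem continuousOn_pow_closedBall_sot (M : ℝ) (n : ℕ) :
    @ContinuousOn _ _ (sot X) (sot X) (fun T : X →L[ℝ] X => T ^ n) (closedBall 0 M) := by
  let := sot X
  intro a _
  have hid : ∀ x, Tendsto (fun T : X →L[ℝ] X => T x) (𝓝[closedBall 0 M] a) (𝓝 (a x)) :=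
    tendsto_sot_iff.mp (tendsto_id.mono_left nhdsWithin_le_nhds)
  have hbound : ∀ᶠ T : X →L[ℝ] X in 𝓝[closedBall 0 M] a, ‖T‖ ≤ M :=
    eventually_nhdsWithin_of_forall fun T hT => by simpa using hT
  exact tendsto_sot_iff.mpr
    (ContinuousLinearMap.tendsto_pow_apply_of_eventually_norm_le hbound hid n)

theorem isClosed_setOf_forall_norm_pow_le_sot (M : ℝ) :
    @IsClosed _ (sot X) {T : X →L[ℝ] X | ∀ n : ℕ, ‖T ^ n‖ ≤ M} := by
  let := sot X
  have hset : {T : X →L[ℝ] X | ∀ n : ℕ, ‖T ^ n‖ ≤ M} =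
      ⋂ n : ℕ, closedBall 0 M ∩ (fun T => T ^ n) ⁻¹' closedBall 0 M := by
    ext T
    simp only [Set.mem_ofPred_eq, Set.mem_iInter, Set.mem_inter_iff, Set.mem_preimage,
      mem_closedBall_zero_iff]
    exact ⟨fun h n => ⟨by simpa using h 1, h n⟩, fun h n => (h n).2⟩
  rw [hset]
  exact isClosed_iInter fun n =>
    (continuousOn_pow_closedBall_sot M n).preimage_isClosed_of_isClosed
      (isClosed_closedBall_sot M) (isClosed_closedBall_sot M)

end StrongOperatorTopology

theorem stmt_2_general (X : Type*) [NormedAddCommGroup X] [NormedSpace ℝ X] :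
    @MeasurableSet (X →L[ℝ] X) (@borel _ (sot X))
      {T : X →L[ℝ] X | ∃ M : ℝ, ∀ n : ℕ, ‖T ^ n‖ ≤ M} := by
  let := sot X
  let : MeasurableSpace (X →L[ℝ] X) := borel _
  have : BorelSpace (X →L[ℝ] X) := ⟨rfl⟩
  have hunion : {T : X →L[ℝ] X | ∃ M : ℝ, ∀ n : ℕ, ‖T ^ n‖ ≤ M} =
      ⋃ m : ℕ, {T : X →L[ℝ] X | ∀ n : ℕ, ‖T ^ n‖ ≤ m} := by
    ext T
    simp only [Set.mem_ofPred_eq, Set.mem_iUnion]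
    refine ⟨fun ⟨M, hM⟩ => ?_, fun ⟨m, hm⟩ => ⟨m, hm⟩⟩
    obtain ⟨m, hm⟩ := exists_nat_ge M
    exact ⟨m, fun n => (hM n).trans hm⟩
  rw [hunion]
  exact MeasurableSet.iUnion fun m => (isClosed_setOf_forall_norm_pow_le_sot m).measurableSet

/-- For a separable Banach space `X`, the set of power-bounded operators is Borel in
`L(X)` with the σ-algebra generated by the strong operator topology. -/
theorem stmt_2 (X : Type*) [NormedAddCommGroup X] [NormedSpace ℝ X] [CompleteSpace X]
    [TopologicalSpace.SeparableSpace X] :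
    @MeasurableSet (X →L[ℝ] X) (@borel _ (sot X))
      {T : X →L[ℝ] X | ∃ M : ℝ, ∀ n : ℕ, ‖T ^ n‖ ≤ M} :=
  stmt_2_general X
end

section
/- For any separable Banach space X, the set L_cb(X) of Cesàro-bounded operators on X is a Borel set in L(X) equipped with the σ-algebra σ(S_op) generated by the strong operator topology. -/
open Filter Topology

/-! On each norm ball `{T | ‖T‖ ≤ r}` the map `T ↦ A_n(T) x` is continuous for the strong
operator topology, because evaluation `(T, y) ↦ T y` is jointly continuous on norm-bounded sets.
The norm balls are SOT-closed and cover `L(X)`, so `T ↦ A_n(T) x` is SOT-Borel. Testing the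
operator norm on a countable dense set `D ⊆ X` then writes the Cesàro-bounded operators as
`⋃ m : ℕ, ⋂ n, ⋂ x ∈ D, {T | ‖A_n(T) x‖ ≤ m ‖x‖}`. -/

open Set

section OperatorFamilies

variable {α : Type*} [TopologicalSpace α]
  {𝕜 E F : Type*} [NontriviallyNormedField 𝕜] [NormedAddCommGroup E] [NormedSpace 𝕜 E]
  [NormedAddCommGroup F] [NormedSpace 𝕜 F]

theorem isClosed_setOf_opNorm_le {f : α → E →L[𝕜] F} (hf : ∀ y, Continuous fun a => f a y)
    {r : ℝ} (hr : 0 ≤ r) : IsClosed {a | ‖f a‖ ≤ r} := by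
  have : {a | ‖f a‖ ≤ r} = ⋂ y, {a | ‖f a y‖ ≤ r * ‖y‖} := by
    ext a
    simpa only [mem_ofPred_eq, mem_iInter] using
      ⟨fun h y => (f a).le_of_opNorm_le h y, (f a).opNorm_le_bound hr⟩
  rw [this]
  exact isClosed_iInter fun y => isClosed_le (hf y).norm continuous_const

theorem ContinuousOn.clm_apply_of_opNorm_le {f : α → E →L[𝕜] F} {g : α → E} {s : Set α}
    {r : ℝ} (hf : ∀ y, ContinuousOn (fun a => f a y) s) (hfr : ∀ a ∈ s, ‖f a‖ ≤ r)
    (hg : ContinuousOn g s) : ContinuousOn (fun a => f a (g a)) s := by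
  intro a₀ ha₀
  -- `f a (g a) = f a (g a - g a₀) + f a (g a₀)`, and the first term is at most `r ‖g a - g a₀‖`.
  have h_small : Tendsto (fun a => f a (g a - g a₀)) (𝓝[s] a₀) (𝓝 0) := by
    have hbound : Tendsto (fun a => r * ‖g a - g a₀‖) (𝓝[s] a₀) (𝓝 0) := by
      simpa using ((hg a₀ ha₀).sub_const (g a₀)).norm.const_mul r
    refine squeeze_zero_norm' (eventually_nhdsWithin_of_forall fun a ha => ?_) hbound
    exact (f a).le_of_opNorm_le (hfr a ha) _
  simpa [ContinuousWithinAt] using h_small.add (hf (g a₀) a₀ ha₀)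

theorem ContinuousOn.pow_apply_of_opNorm_le {f : α → E →L[𝕜] E} {s : Set α} {r : ℝ}
    (hf : ∀ y, ContinuousOn (fun a => f a y) s) (hfr : ∀ a ∈ s, ‖f a‖ ≤ r) (k : ℕ) (y : E) :
    ContinuousOn (fun a => (f a ^ k) y) s := by
  induction k with
  | zero => simpa using continuousOn_const
  | succ k ih =>
    simpa only [pow_succ', mul_apply_eq_comp] using ih.clm_apply_of_opNorm_le hf hfr

end OperatorFamilies

theorem Measurable.of_continuousOn_closed_cover {α β ι : Type*} [TopologicalSpace α]
    [MeasurableSpace α] [OpensMeasurableSpace α] [TopologicalSpace β] [MeasurableSpace β]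
    [BorelSpace β] [Countable ι] {s : ι → Set α} (hs : ∀ i, IsClosed (s i))
    (hcover : ⋃ i, s i = univ) {g : α → β} (hg : ∀ i, ContinuousOn g (s i)) : Measurable g := by
  refine measurable_of_isClosed fun C hC => ?_
  have : g ⁻¹' C = ⋃ i, s i ∩ g ⁻¹' C := by rw [← iUnion_inter, hcover, univ_inter]
  rw [this]
  exact .iUnion fun i => ((hg i).preimage_isClosed_of_isClosed (hs i) hC).measurableSet

theorem exists_opNorm_le_iff_of_dense {𝕜 E F ι : Type*} [NontriviallyNormedField 𝕜]
    [NormedAddCommGroup E] [NormedSpace 𝕜 E] [NormedAddCommGroup F] [NormedSpace 𝕜 F]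
    {L : ι → E →L[𝕜] F} {D : Set E} (hD : Dense D) :
    (∃ M : ℝ, ∀ i, ‖L i‖ ≤ M) ↔ ∃ m : ℕ, ∀ i, ∀ x ∈ D, ‖L i x‖ ≤ m * ‖x‖ := by
  constructor
  · rintro ⟨M, hM⟩
    obtain ⟨m, hm⟩ := exists_nat_ge M
    exact ⟨m, fun i x _ => (L i).le_of_opNorm_le ((hM i).trans hm) x⟩
  · rintro ⟨m, hm⟩
    refine ⟨m, fun i => (L i).opNorm_le_bound m.cast_nonneg fun x => ?_⟩
    have hclosed : IsClosed {x | ‖L i x‖ ≤ m * ‖x‖} :=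
      isClosed_le (L i).continuous.norm (continuous_const.mul continuous_norm)
    exact hclosed.closure_subset_iff.mpr (hm i) (hD x)

section Cesaro

variable {X : Type*} [NormedAddCommGroup X] [NormedSpace ℝ X]

theorem continuous_sot_apply (x : X) : Continuous[sot X, _] fun T : X →L[ℝ] X => T x :=
  @Continuous.comp _ _ _ (sot X) _ _ _ _ (continuous_apply x) continuous_induced_dom

theorem measurable_cesaroMean_apply {α : Type*} [TopologicalSpace α] [MeasurableSpace α]
    [OpensMeasurableSpace α] [MeasurableSpace X] [BorelSpace X] {f : α → X →L[ℝ] X}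
    (hf : ∀ y, Continuous fun a => f a y) (n : ℕ) (x : X) :
    Measurable fun a => cesaroMean (f a) n x := by
  refine .of_continuousOn_closed_cover (s := fun m : ℕ => {a | ‖f a‖ ≤ m})
    (fun m => isClosed_setOf_opNorm_le hf m.cast_nonneg)
    (eq_univ_of_forall fun a => mem_iUnion.2 (exists_nat_ge ‖f a‖)) fun m => ?_
  have hpow := ContinuousOn.pow_apply_of_opNorm_le (fun y => (hf y).continuousOn)
    (s := {a | ‖f a‖ ≤ m}) fun _ ha => ha
  simp only [cesaroMean, smul_apply, sum_apply]
  exact (continuousOn_finsetSum (Finset.range n) fun k _ => hpow k x).const_smul (n : ℝ)⁻¹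

end Cesaro

theorem stmt_3_general (X : Type*) [NormedAddCommGroup X] [NormedSpace ℝ X]
    [TopologicalSpace.SeparableSpace X] :
    @MeasurableSet (X →L[ℝ] X) (@borel _ (sot X))
      {T : X →L[ℝ] X | CesaroBounded T} := by
  let := sot X
  let : MeasurableSpace (X →L[ℝ] X) := borel _
  have : BorelSpace (X →L[ℝ] X) := ⟨rfl⟩
  borelize X
  obtain ⟨D, hD_countable, hD_dense⟩ := TopologicalSpace.exists_countable_dense X
  have h_eq : {T : X →L[ℝ] X | CesaroBounded T} =
      ⋃ m : ℕ, ⋂ n : ℕ, ⋂ x ∈ D, {T | ‖cesaroMean T n x‖ ≤ m * ‖x‖} := by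
    ext T
    simpa only [CesaroBounded, mem_ofPred_eq, mem_iUnion, mem_iInter] using
      exists_opNorm_le_iff_of_dense (L := cesaroMean T) hD_dense
  rw [h_eq]
  exact .iUnion fun m => .iInter fun n => .biInter hD_countable fun x _ =>
    measurableSet_le (measurable_cesaroMean_apply continuous_sot_apply n x).norm
      measurable_const

/-- For a separable Banach space `X`, the set of Cesàro-bounded operators is Borel in
`L(X)` with the σ-algebra generated by the strong operator topology. -/
theorem stmt_3 (X : Type*) [NormedAddCommGroup X] [NormedSpace ℝ X] [CompleteSpace X]
    [TopologicalSpace.SeparableSpace X] :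
    @MeasurableSet (X →L[ℝ] X) (@borel _ (sot X))
      {T : X →L[ℝ] X | CesaroBounded T} :=
  stmt_3_general X
end

section
/- For any separable Banach space X, the set 𝓔(X) of ergodic operators on X is a Borel set in L(X) equipped with the σ-algebra σ(S_op) generated by the strong operator topology. -/
open Filter Topology

/-!
By Banach–Steinhaus, `T` is ergodic iff its Cesàro means are uniformly bounded and converge on a
countable dense set `{dᵢ}`; and `‖A‖ ≤ M` iff `‖A dᵢ‖ ≤ M ‖dᵢ‖` for all `i`. So both conditions
are countable combinations of conditions on the vectors `Aₙ(T) dᵢ`, and it remains to see that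
`T ↦ Aₙ(T) x` is SOT-Borel. Evaluation `T ↦ T x` is SOT-continuous, and `(x, T) ↦ T x` is
continuous in `x` and measurable in `T`, hence jointly measurable since `X` is separable; this
makes `T ↦ T (f T)` measurable for measurable `f`, and by induction `T ↦ Tᵏ x` is measurable.
-/

open MeasureTheory TopologicalSpace

section DenseRange

variable {𝕜 E F : Type*} [NontriviallyNormedField 𝕜] [NormedAddCommGroup E] [NormedSpace 𝕜 E]
  [NormedAddCommGroup F] [NormedSpace 𝕜 F] {ι : Type*} {d : ι → E}

theorem ContinuousLinearMap.opNorm_le_iff_of_denseRange (hd : DenseRange d) (A : E →L[𝕜] F)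
    {M : ℝ} (hM : 0 ≤ M) : ‖A‖ ≤ M ↔ ∀ i, ‖A (d i)‖ ≤ M * ‖d i‖ :=
  ⟨fun h i => A.le_of_opNorm_le h (d i), fun h => A.opNorm_le_bound hM fun x =>
    hd.induction_on x (isClosed_le A.continuous.norm (continuous_const.mul continuous_norm)) h⟩

theorem isClosed_setOf_cauchySeq_apply {A : ℕ → E →L[𝕜] F} {M : ℝ} (hA : ∀ n, ‖A n‖ ≤ M) :
    IsClosed {x | CauchySeq fun n => A n x} := by
  have hbound (p : ℕ × ℕ) : ‖A p.2 - A p.1‖ ≤ M + M :=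
    (norm_sub_le _ _).trans (add_le_add (hA p.2) (hA p.1))
  have hequi : Equicontinuous ((↑) ∘ fun p : ℕ × ℕ => A p.2 - A p.1) :=
    ((NormedSpace.equicontinuous_TFAE _).out 5 1).mp (by exact ⟨_, hbound⟩)
  -- `A · x` is Cauchy iff the equicontinuous family `A q - A p` tends to `0` at `x`
  simp_rw [cauchySeq_iff_tendsto, uniformity_eq_comap_nhds_zero, tendsto_comap_iff]
  exact hequi.isClosed_setOfPred_tendsto (f := 0) continuous_const

theorem forall_exists_tendsto_apply_iff_of_denseRange [CompleteSpace E] [CompleteSpace F]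
    (hd : DenseRange d) (A : ℕ → E →L[𝕜] F) :
    (∀ x, ∃ y, Tendsto (fun n => A n x) atTop (𝓝 y)) ↔
      (∃ M, ∀ n, ‖A n‖ ≤ M) ∧ ∀ i, ∃ y, Tendsto (fun n => A n (d i)) atTop (𝓝 y) := by
  refine ⟨fun h => ⟨banach_steinhaus fun x => ?_, fun i => h (d i)⟩, ?_⟩
  · obtain ⟨y, hy⟩ := h x
    obtain ⟨C, hC⟩ := hy.norm.bddAbove_range
    exact ⟨C, fun n => hC ⟨n, rfl⟩⟩
  · rintro ⟨⟨M, hM⟩, h⟩ x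
    exact cauchySeq_tendsto_of_complete <| hd.induction_on x (isClosed_setOf_cauchySeq_apply hM)
      fun i => (h i).choose_spec.cauchySeq

theorem isErgodicOp_iff_of_denseRange {X : Type*} [NormedAddCommGroup X] [NormedSpace ℝ X]
    [CompleteSpace X] {d : ι → X} (hd : DenseRange d) (T : X →L[ℝ] X) :
    IsErgodicOp T ↔
      CesaroBounded T ∧ ∀ i, ∃ y, Tendsto (fun n => cesaroMean T n (d i)) atTop (𝓝 y) :=
  forall_exists_tendsto_apply_iff_of_denseRange hd _

end DenseRange

section Measurability

variable {α 𝕜 E F : Type*} [MeasurableSpace α] [NontriviallyNormedField 𝕜]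
  [NormedAddCommGroup E] [NormedSpace 𝕜 E] [SeparableSpace E]
  [NormedAddCommGroup F] [NormedSpace 𝕜 F] [MeasurableSpace F] [BorelSpace F]

theorem measurableSet_setOf_opNorm_le {S : α → E →L[𝕜] F} (hS : ∀ x, Measurable fun a => S a x)
    {M : ℝ} (hM : 0 ≤ M) : MeasurableSet {a | ‖S a‖ ≤ M} := by
  obtain ⟨d, hd⟩ := exists_dense_seq E
  simp_rw [(S _).opNorm_le_iff_of_denseRange hd hM, Set.ofPred_forall]
  exact .iInter fun i => measurableSet_le (hS (d i)).norm measurable_const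

variable [MeasurableSpace E] [BorelSpace E]

theorem measurable_clm_apply_of_measurable_apply {S : α → E →L[𝕜] F} (hS : ∀ x, Measurable fun a => S a x)
    {f : α → E} (hf : Measurable f) : Measurable fun a => S a (f a) :=
  (measurable_uncurry_of_continuous_of_measurable (u := fun x a => S a x)
    (fun a => (S a).continuous) hS).comp (hf.prodMk measurable_id)

omit [MeasurableSpace F] [BorelSpace F] in
theorem measurable_pow_apply {S : α → E →L[𝕜] E} (hS : ∀ x, Measurable fun a => S a x)
    (k : ℕ) (x : E) : Measurable fun a => (S a ^ k) x := by
  induction k with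
  | zero =>
    simp only [pow_zero]
    exact measurable_const
  | succ k ih =>
    simp only [pow_succ']
    exact measurable_clm_apply_of_measurable_apply hS ih

end Measurability

section Cesaro

variable {α E : Type*} [MeasurableSpace α] [NormedAddCommGroup E] [NormedSpace ℝ E]
  [SeparableSpace E] [MeasurableSpace E] [BorelSpace E] {S : α → E →L[ℝ] E}

theorem measurable_cesaroMean_apply_s4 (hS : ∀ x, Measurable fun a => S a x) (n : ℕ) (x : E) :
    Measurable fun a => cesaroMean (S a) n x := by
  simp only [cesaroMean, FunLike.coe_smul, FunLike.coe_sum, Pi.smul_apply, Finset.sum_apply]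
  exact (Finset.measurable_sum _ fun k _ => measurable_pow_apply hS k x).const_smul _

theorem measurableSet_setOf_cesaroBounded (hS : ∀ x, Measurable fun a => S a x) :
    MeasurableSet {a | CesaroBounded (S a)} := by
  have : {a | CesaroBounded (S a)} = ⋃ M : ℕ, ⋂ n, {a | ‖cesaroMean (S a) n‖ ≤ M} := by
    ext a
    simp only [CesaroBounded, Set.mem_ofPred_eq, Set.mem_iUnion, Set.mem_iInter]
    exact ⟨fun ⟨M, hM⟩ => ⟨⌈M⌉₊, fun n => (hM n).trans (Nat.le_ceil M)⟩,
      fun ⟨M, hM⟩ => ⟨M, hM⟩⟩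
  rw [this]
  exact .iUnion fun M => .iInter fun n =>
    measurableSet_setOf_opNorm_le (measurable_cesaroMean_apply_s4 hS n) M.cast_nonneg

theorem measurableSet_setOf_isErgodicOp [CompleteSpace E] (hS : ∀ x, Measurable fun a => S a x) :
    MeasurableSet {a | IsErgodicOp (S a)} := by
  obtain ⟨d, hd⟩ := exists_dense_seq E
  simp_rw [isErgodicOp_iff_of_denseRange hd, Set.ofPred_and, Set.ofPred_forall]
  exact (measurableSet_setOf_cesaroBounded hS).inter
    (.iInter fun i => measurableSet_exists_tendsto fun n => measurable_cesaroMean_apply_s4 hS n (d i))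

end Cesaro

theorem measurable_apply_sot {X : Type*} [NormedAddCommGroup X] [NormedSpace ℝ X]
    [MeasurableSpace X] [BorelSpace X] (x : X) :
    Measurable[@borel _ (sot X)] fun T : X →L[ℝ] X => T x :=
  letI := sot X
  letI : MeasurableSpace (X →L[ℝ] X) := @borel _ (sot X)
  haveI : BorelSpace (X →L[ℝ] X) := ⟨rfl⟩
  Continuous.measurable (f := fun T : X →L[ℝ] X => T x)
    ((continuous_apply x).comp continuous_induced_dom)

/-- For a separable Banach space `X`, the set of ergodic operators is Borel in
`L(X)` with the σ-algebra generated by the strong operator topology. -/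
theorem stmt_4 (X : Type*) [NormedAddCommGroup X] [NormedSpace ℝ X] [CompleteSpace X]
    [TopologicalSpace.SeparableSpace X] :
    @MeasurableSet (X →L[ℝ] X) (@borel _ (sot X))
      {T : X →L[ℝ] X | IsErgodicOp T} := by
  borelize X
  let _ : MeasurableSpace (X →L[ℝ] X) := @borel _ (sot X)
  exact measurableSet_setOf_isErgodicOp (S := id) measurable_apply_sot
end

section
/- For any separable Banach space X, the set 𝓤𝓔(X) of uniformly ergodic operators on X is a Borel set in L(X) equipped with the σ-algebra σ(S_op) generated by the strong operator topology. -/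
open Filter Topology

/-!
Since `X` is complete, `T` is uniformly ergodic iff `(A_n)` is Cauchy in operator norm, i.e.
`∀ k, ∃ N, ∀ n m ≥ N, ‖A_n - A_m‖ < 1/(k+1)`: a countable Boolean combination of the sets
`{T | ‖A_n - A_m‖ < r}`. For separable `X` the operator norm of an operator is determined by its
values on a dense sequence, so `T ↦ ‖A_n - A_m‖` is SOT-Borel once every `T ↦ A_n x` is. The
latter follows from `T ↦ T^k x` being SOT-Borel, which is proved by induction on `k`:
`T^(k+1) x = T (T^k x)`, and `(y, T) ↦ T y` is a Carathéodory function (continuous in `y`,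
SOT-continuous in `T`), hence jointly measurable.
-/

open MeasureTheory

section OpNorm

variable {𝕜 E F : Type*} [NontriviallyNormedField 𝕜] [NormedAddCommGroup E] [NormedSpace 𝕜 E]
  [NormedAddCommGroup F] [NormedSpace 𝕜 F]

theorem ContinuousLinearMap.opNorm_le_of_denseRange {ι : Type*} {u : ι → E} (hu : DenseRange u)
    (f : E →L[𝕜] F) {C : ℝ} (hC : 0 ≤ C) (h : ∀ i, ‖f (u i)‖ ≤ C * ‖u i‖) : ‖f‖ ≤ C :=
  f.opNorm_le_bound hC fun x =>
    hu.induction_on x (isClosed_le (by fun_prop) (by fun_prop)) h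

variable [TopologicalSpace.SeparableSpace E] {α : Type*} {m : MeasurableSpace α}

theorem Measurable.clm_apply_of_measurable_apply [MeasurableSpace E] [BorelSpace E]
    [MeasurableSpace F] [BorelSpace F] {A : α → E →L[𝕜] F} (hA : ∀ x, Measurable fun a => A a x)
    {g : α → E} (hg : Measurable g) : Measurable fun a => A a (g a) := by
  have : SecondCountableTopology E := UniformSpace.secondCountable_of_separable E
  have hjoint : Measurable fun p : E × α => A p.2 p.1 :=
    measurable_uncurry_of_continuous_of_measurable (u := fun x a => A a x)
      (fun a => (A a).continuous) hA
  exact hjoint.comp (hg.prodMk measurable_id)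

theorem measurable_opNorm_of_measurable_apply [MeasurableSpace F] [OpensMeasurableSpace F]
    {A : α → E →L[𝕜] F} (hA : ∀ x, Measurable fun a => A a x) : Measurable fun a => ‖A a‖ := by
  set u := TopologicalSpace.denseSeq E
  refine measurable_of_Iic fun c => ?_
  by_cases hc : 0 ≤ c
  · have hset : (fun a => ‖A a‖) ⁻¹' Set.Iic c = ⋂ i, {a | ‖A a (u i)‖ ≤ c * ‖u i‖} := by
      ext a
      simp only [Set.mem_preimage, Set.mem_Iic, Set.mem_iInter, Set.mem_ofPred_eq]
      exact ⟨fun h i => (A a).le_of_opNorm_le h (u i),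
        (A a).opNorm_le_of_denseRange (TopologicalSpace.denseRange_denseSeq E) hc⟩
    rw [hset]
    exact .iInter fun i => measurableSet_le (hA (u i)).norm measurable_const
  · convert MeasurableSet.empty
    ext a
    simp only [Set.mem_preimage, Set.mem_Iic, Set.mem_empty_iff_false, iff_false]
    exact fun h => hc ((norm_nonneg _).trans h)

end OpNorm

theorem measurableSet_cauchySeq {α E : Type*} {m : MeasurableSpace α} [PseudoMetricSpace E]
    {f : ℕ → α → E} (hf : ∀ i j, Measurable fun a => dist (f i a) (f j a)) :
    MeasurableSet {a | CauchySeq fun n => f n a} := by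
  have hset : {a | CauchySeq fun n => f n a} = ⋂ k : ℕ, ⋃ N : ℕ, ⋂ i ≥ N, ⋂ j ≥ N,
      {a | dist (f i a) (f j a) < 1 / ((k : ℝ) + 1)} := by
    ext a
    simp [Metric.uniformity_basis_dist_inv_nat_succ.cauchySeq_iff]
  rw [hset]
  exact .iInter fun k => .iUnion fun N => .iInter fun i => .iInter fun _ => .iInter fun j =>
    .iInter fun _ => measurableSet_lt (hf i j) measurable_const

theorem isUniformlyErgodicOp_iff_cauchySeq {X : Type*} [NormedAddCommGroup X] [NormedSpace ℝ X]
    [CompleteSpace X] (T : X →L[ℝ] X) : IsUniformlyErgodicOp T ↔ CauchySeq (cesaroMean T) :=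
  cauchy_map_iff_exists_tendsto.symm

section StrongOperatorTopology

variable {X : Type*} [NormedAddCommGroup X] [NormedSpace ℝ X] [MeasurableSpace X] [BorelSpace X]

theorem measurable_sot_apply (x : X) : Measurable[@borel _ (sot X)] fun T : X →L[ℝ] X => T x := by
  rw [BorelSpace.measurable_eq (α := X)]
  let := sot X
  exact ((continuous_apply x).comp continuous_induced_dom).borel_measurable

variable [TopologicalSpace.SeparableSpace X]

theorem measurable_sot_pow_apply (k : ℕ) (x : X) :
    Measurable[@borel _ (sot X)] fun T : X →L[ℝ] X => (T ^ k) x := by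
  induction k with
  | zero => exact measurable_const
  | succ k ih =>
    simp only [pow_succ', mul_apply_eq_comp]
    exact ih.clm_apply_of_measurable_apply measurable_sot_apply

theorem measurable_sot_cesaroMean_apply (n : ℕ) (x : X) :
    Measurable[@borel _ (sot X)] fun T : X →L[ℝ] X => cesaroMean T n x := by
  simp only [cesaroMean, smul_apply, sum_apply]
  exact (Finset.measurable_sum _ fun k _ => measurable_sot_pow_apply k x).const_smul _

end StrongOperatorTopology

/-- For a separable Banach space `X`, the set of uniformly ergodic operators is Borel in
`L(X)` with the σ-algebra generated by the strong operator topology. -/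
theorem stmt_5 (X : Type*) [NormedAddCommGroup X] [NormedSpace ℝ X] [CompleteSpace X]
    [TopologicalSpace.SeparableSpace X] :
    @MeasurableSet (X →L[ℝ] X) (@borel _ (sot X))
      {T : X →L[ℝ] X | IsUniformlyErgodicOp T} := by
  borelize X
  simp only [isUniformlyErgodicOp_iff_cauchySeq]
  refine measurableSet_cauchySeq fun i j => ?_
  simp only [dist_eq_norm]
  exact measurable_opNorm_of_measurable_apply fun x =>
    (measurable_sot_cesaroMean_apply i x).sub (measurable_sot_cesaroMean_apply j x)
end

section
/- Let X be a separable Banach space, n ≥ 1 and k ≥ 1 natural numbers, and σ a finite sequence of natural numbers. Then the set of operators T with ‖T‖ ≤ n that are Cesàro-bounded and satisfy σ ∈ 𝒜_e(T, 1/k) is a Borel subset of the Polish space of continuous linear operators on X of norm at most n equipped with the strong operator topology. -/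
open Filter Topology

/-!
On a norm-bounded set of operators the strong operator topology makes `(T, x) ↦ T x` jointly
continuous, so `T ↦ A_m x` is continuous for all `m` and `x`. Both conditions can then be tested
on a dense sequence `(u_i)` of `X`. Cesàro-boundedness becomes `∃ M ∈ ℕ, ∀ m i,
‖A_m u_i‖ ≤ M ‖u_i‖`, a countable union of countable intersections of closed sets. The condition
defining `σ ∈ 𝒜_e(T, ε)` at a point `x` is open in `x`, and the closed unit ball is the closure
of the open one, so a witness can be found among the `u_i`: this gives a countable union of
open sets.
-/

open Metric

section JointContinuity

variable {α 𝕜 E F : Type*} [TopologicalSpace α] [NontriviallyNormedField 𝕜]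
  [NormedAddCommGroup E] [NormedSpace 𝕜 E] [NormedAddCommGroup F] [NormedSpace 𝕜 F]
  {op : α → E →L[𝕜] F} {c : ℝ}

theorem continuous_clm_apply_of_norm_le (hop : ∀ x, Continuous fun a => op a x)
    (hc : ∀ a, ‖op a‖ ≤ c) {f : α → E} (hf : Continuous f) :
    Continuous fun a => op a (f a) := by
  refine continuous_iff_continuousAt.2 fun a₀ => ?_
  rw [ContinuousAt, tendsto_iff_norm_sub_tendsto_zero]
  have hbound : ∀ a, ‖op a (f a) - op a₀ (f a₀)‖ ≤
      c * ‖f a - f a₀‖ + ‖op a (f a₀) - op a₀ (f a₀)‖ := fun a =>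
    calc ‖op a (f a) - op a₀ (f a₀)‖
        ≤ ‖op a (f a - f a₀)‖ + ‖op a (f a₀) - op a₀ (f a₀)‖ := by
          rw [map_sub]; exact norm_sub_le_norm_sub_add_norm_sub _ _ _
      _ ≤ c * ‖f a - f a₀‖ + ‖op a (f a₀) - op a₀ (f a₀)‖ := by
          gcongr; exact (op a).le_of_opNorm_le (hc a) _
  have hf₀ := tendsto_iff_norm_sub_tendsto_zero.1 (hf.tendsto a₀)
  have hop₀ := tendsto_iff_norm_sub_tendsto_zero.1 ((hop (f a₀)).tendsto a₀)
  refine squeeze_zero (fun _ => norm_nonneg _) hbound ?_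
  simpa using (hf₀.const_mul c).add hop₀

theorem continuous_pow_apply_of_norm_le {op : α → E →L[𝕜] E}
    (hop : ∀ x, Continuous fun a => op a x) (hc : ∀ a, ‖op a‖ ≤ c) (j : ℕ) (x : E) :
    Continuous fun a => (op a ^ j) x := by
  induction j with
  | zero => simpa using continuous_const
  | succ j ih =>
    simp only [pow_succ']
    exact continuous_clm_apply_of_norm_le hop hc ih

end JointContinuity

theorem exists_norm_le_iff_of_denseRange {ι κ 𝕜 E F : Type*} [NontriviallyNormedField 𝕜]
    [NormedAddCommGroup E] [NormedSpace 𝕜 E] [NormedAddCommGroup F] [NormedSpace 𝕜 F]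
    {u : κ → E} (hu : DenseRange u) (f : ι → E →L[𝕜] F) :
    (∃ M : ℝ, ∀ i, ‖f i‖ ≤ M) ↔ ∃ M : ℕ, ∀ i j, ‖f i (u j)‖ ≤ M * ‖u j‖ := by
  constructor
  · rintro ⟨M, hM⟩
    exact ⟨⌈M⌉₊, fun i j => (f i).le_of_opNorm_le ((hM i).trans (Nat.le_ceil M)) _⟩
  · rintro ⟨M, hM⟩
    refine ⟨M, fun i => (f i).opNorm_le_bound M.cast_nonneg fun x => ?_⟩
    exact hu.induction_on x (isClosed_le (f i).continuous.norm (continuous_norm.const_mul _))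
      (hM i)

theorem DenseRange.exists_norm_le_and_iff {ι E : Type*} [NormedAddCommGroup E]
    [NormedSpace ℝ E] {u : ι → E} (hu : DenseRange u) {P : E → Prop} (hP : IsOpen {x | P x})
    {r : ℝ} (hr : r ≠ 0) : (∃ x, ‖x‖ ≤ r ∧ P x) ↔ ∃ i, ‖u i‖ ≤ r ∧ P (u i) := by
  refine ⟨fun h => ?_, fun ⟨i, hi⟩ => ⟨u i, hi⟩⟩
  have h' : (ball (0 : E) r ∩ {x | P x}).Nonempty := by
    rw [← closure_inter_open_nonempty_iff hP, closure_ball 0 hr]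
    simpa [Set.Nonempty] using h
  obtain ⟨i, hi, hPi⟩ := hu.exists_mem_open (isOpen_ball.inter hP) h'
  exact ⟨i, (mem_ball_zero_iff.1 hi).le, hPi⟩

section Cesaro

variable {X : Type*} [NormedAddCommGroup X] [NormedSpace ℝ X]

theorem isOpen_setOf_lt_norm_cesaroMean_sub (T : X →L[ℝ] X) (ε : ℝ) (σ : List ℕ) :
    IsOpen {x : X | ∀ p, p + 1 < σ.length →
      ε < ‖cesaroMean T (σ.getD p 0) x - cesaroMean T (σ.getD (p + 1) 0) x‖} := by
  have hfin : {p | p + 1 < σ.length}.Finite :=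
    (Set.finite_lt_nat σ.length).subset fun _ => Nat.lt_of_succ_lt
  convert hfin.isOpen_biInter fun p _ => isOpen_lt (continuous_const (y := ε))
    ((cesaroMean T (σ.getD p 0)).continuous.sub (cesaroMean T (σ.getD (p + 1) 0)).continuous).norm
  ext x
  simp

variable {α : Type*} [TopologicalSpace α] {op : α → X →L[ℝ] X} {c : ℝ}

theorem continuous_cesaroMean_apply_of_norm_le (hop : ∀ x, Continuous fun a => op a x)
    (hc : ∀ a, ‖op a‖ ≤ c) (m : ℕ) (x : X) :
    Continuous fun a => cesaroMean (op a) m x := by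
  simp only [cesaroMean, smul_apply, sum_apply]
  exact (continuous_finsetSum _ fun j _ => continuous_pow_apply_of_norm_le hop hc j x).const_smul _

variable [TopologicalSpace.SeparableSpace X] [MeasurableSpace α] [OpensMeasurableSpace α]

theorem measurableSet_setOf_cesaroBounded_s7 (hop : ∀ x, Continuous fun a => op a x)
    (hc : ∀ a, ‖op a‖ ≤ c) : MeasurableSet {a | CesaroBounded (op a)} := by
  obtain ⟨u, hu⟩ := TopologicalSpace.exists_dense_seq X
  simp only [CesaroBounded, exists_norm_le_iff_of_denseRange hu]
  exact Measurable.setOf <| Measurable.exists fun M => Measurable.forall fun m =>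
    Measurable.forall fun j => (measurableSet_le
      (continuous_cesaroMean_apply_of_norm_le hop hc m (u j)).norm.measurable
      measurable_const).mem

theorem measurableSet_setOf_mem_ergoTree (hop : ∀ x, Continuous fun a => op a x)
    (hc : ∀ a, ‖op a‖ ≤ c) (ε : ℝ) (σ : List ℕ) : MeasurableSet {a | σ ∈ ergoTree (op a) ε} := by
  obtain ⟨u, hu⟩ := TopologicalSpace.exists_dense_seq X
  simp only [ergoTree, Set.mem_ofPred_eq, hu.exists_norm_le_and_iff
    (isOpen_setOf_lt_norm_cesaroMean_sub _ ε σ) one_ne_zero]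
  have hcont (m : ℕ) (x : X) := continuous_cesaroMean_apply_of_norm_le hop hc m x
  exact Measurable.setOf <| measurable_const.and <| measurable_const.or <|
    Measurable.exists fun i => measurable_const.and <| Measurable.forall fun p =>
      measurable_const.imp (measurableSet_lt measurable_const
        ((hcont _ (u i)).sub (hcont _ (u i))).norm.measurable).mem

end Cesaro

theorem stmt_7_general (X : Type*) [NormedAddCommGroup X] [NormedSpace ℝ X]
    [TopologicalSpace.SeparableSpace X] (n k : ℕ) (σ : List ℕ) :
    @MeasurableSet {T : X →L[ℝ] X // ‖T‖ ≤ (n : ℝ)}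
      (@borel _ (TopologicalSpace.induced (fun T => T.1) (sot X)))
      {T : {T : X →L[ℝ] X // ‖T‖ ≤ (n : ℝ)} |
        CesaroBounded T.1 ∧ σ ∈ ergoTree T.1 (1 / (k : ℝ))} := by
  let _ : TopologicalSpace (X →L[ℝ] X) := sot X
  let _ : TopologicalSpace {T : X →L[ℝ] X // ‖T‖ ≤ (n : ℝ)} := .induced (fun T => T.1) (sot X)
  let _ : MeasurableSpace {T : X →L[ℝ] X // ‖T‖ ≤ (n : ℝ)} := borel _
  have : BorelSpace {T : X →L[ℝ] X // ‖T‖ ≤ (n : ℝ)} := ⟨rfl⟩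
  have hop (x : X) : Continuous fun T : {T : X →L[ℝ] X // ‖T‖ ≤ (n : ℝ)} => T.1 x :=
    (continuous_apply x).comp (continuous_induced_dom.comp continuous_induced_dom)
  exact (measurableSet_setOf_cesaroBounded_s7 hop Subtype.prop).inter
    (measurableSet_setOf_mem_ergoTree hop Subtype.prop _ σ)

/-- For a separable Banach space `X`, `n, k ≥ 1` and a finite sequence `σ`, the set of
Cesàro-bounded operators of norm `≤ n` with `σ ∈ 𝒜_e(T, 1/k)` is Borel in the Polish space
of operators of norm at most `n` with the strong operator topology. -/
theorem stmt_7 (X : Type*) [NormedAddCommGroup X] [NormedSpace ℝ X] [CompleteSpace X]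
    [TopologicalSpace.SeparableSpace X] (n k : ℕ) (hn : 1 ≤ n) (hk : 1 ≤ k) (σ : List ℕ) :
    @MeasurableSet {T : X →L[ℝ] X // ‖T‖ ≤ (n : ℝ)}
      (@borel _ (TopologicalSpace.induced (fun T => T.1) (sot X)))
      {T : {T : X →L[ℝ] X // ‖T‖ ≤ (n : ℝ)} |
        CesaroBounded T.1 ∧ σ ∈ ergoTree T.1 (1 / (k : ℝ))} :=
  stmt_7_general X n k σ
end

section
/- Let X be a separable Banach space and n ≥ 1. Then the set of operators T with ‖T‖ ≤ n that are Cesàro-bounded and satisfy condition (NSE) is an analytic subset of the Polish space of continuous linear operators on X of norm at most n with the strong operator topology; equivalently, the set of Cesàro-bounded operators of norm at most n not satisfying (NSE) (i.e., the super-ergodic ones) is coanalytic in that Polish space. -/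
/-!
The closed ball `‖T‖ ≤ c` with the strong operator topology is Polish: restricting operators to a
dense sequence `(d i)` embeds it into `ℕ → X`. The embedding is inducing because a norm-bounded
family of operators is equicontinuous, and it has closed range because a filter that is pointwise
Cauchy on the `d i` is pointwise Cauchy everywhere, while the ball is closed in `X → X` for the
topology of pointwise convergence. Evaluation is jointly continuous on the ball, so the Cesàro
means are continuous in `T`. Finally, `CesaroBounded T ∧ NSE T` holds iff for some `M k : ℕ` some
`j : ℕ → ℕ` makes `(T, j)` lie in the Borel set of pairs with `‖A_n x‖ ≤ M ‖x‖` for all `n, x` and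
with `j` an (NSE) witness for `ε = 1/(k+1)`; a countable union of projections of Borel subsets of
a Polish space is analytic.
-/

open Filter Topology

section CesaroSets

variable {α X : Type*} [TopologicalSpace α] [NormedAddCommGroup X] [NormedSpace ℝ X]
  {F : α → X →L[ℝ] X}

lemma cesaroBounded_iff_exists_nat {T : X →L[ℝ] X} :
    CesaroBounded T ↔ ∃ M : ℕ, ∀ n x, ‖cesaroMean T n x‖ ≤ M * ‖x‖ := by
  constructor
  · rintro ⟨M, hM⟩
    refine ⟨⌈M⌉₊, fun n x => (cesaroMean T n).le_of_opNorm_le ((hM n).trans (Nat.le_ceil M)) x⟩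
  · rintro ⟨M, hM⟩
    exact ⟨M, fun n => (cesaroMean T n).opNorm_le_bound M.cast_nonneg (hM n)⟩

lemma nse_iff_exists_nat {T : X →L[ℝ] X} :
    NSE T ↔ ∃ k : ℕ, ∃ j : ℕ → ℕ, StrictMono j ∧ ∀ m, ∃ x : X, ‖x‖ ≤ 1 ∧
      ∀ p ≤ m, 1 / ((k : ℝ) + 1) < ‖cesaroMean T (j p) x - cesaroMean T (j (p + 1)) x‖ := by
  constructor
  · rintro ⟨ε, hε, j, hj, hx⟩
    obtain ⟨k, hk⟩ := exists_nat_one_div_lt hε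
    refine ⟨k, j, hj, fun m => ?_⟩
    obtain ⟨x, hx1, hxj⟩ := hx m
    exact ⟨x, hx1, fun p hp => hk.trans (hxj p hp)⟩
  · rintro ⟨k, hj⟩
    exact ⟨1 / ((k : ℝ) + 1), by positivity, hj⟩

lemma isClosed_setOf_forall_norm_cesaroMean_le
    (hF : ∀ n x, Continuous fun a => cesaroMean (F a) n x) (M : ℝ) :
    IsClosed {a | ∀ n x, ‖cesaroMean (F a) n x‖ ≤ M * ‖x‖} := by
  simp only [Set.ofPred_forall]
  exact isClosed_iInter fun n => isClosed_iInter fun x =>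
    isClosed_le (hF n x).norm continuous_const

lemma measurableSet_setOf_nse_witness [MeasurableSpace (α × (ℕ → ℕ))]
    [OpensMeasurableSpace (α × (ℕ → ℕ))]
    (hF : ∀ n x, Continuous fun a => cesaroMean (F a) n x) (ε : ℝ) :
    MeasurableSet {q : α × (ℕ → ℕ) | StrictMono q.2 ∧ ∀ m, ∃ x : X, ‖x‖ ≤ 1 ∧
      ∀ p ≤ m, ε < ‖cesaroMean (F q.1) (q.2 p) x - cesaroMean (F q.1) (q.2 (p + 1)) x‖} := by
  have happ (i : ℕ) (x : X) :
      Continuous fun q : α × (ℕ → ℕ) => cesaroMean (F q.1) (q.2 i) x :=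
    (continuous_prod_of_discrete_right.2 fun n => hF n x :
        Continuous fun q : α × ℕ => cesaroMean (F q.1) q.2 x).comp
      (continuous_fst.prodMk ((continuous_apply i).comp continuous_snd))
  have hmono : {q : α × (ℕ → ℕ) | StrictMono q.2} = ⋂ a, {q | q.2 a < q.2 (a + 1)} := by
    ext q
    simpa only [Set.mem_iInter] using
      ⟨fun h a => h a.lt_succ_self, fun h => strictMono_nat_of_lt_succ h⟩
  rw [Set.ofPred_and, hmono, Set.ofPred_forall]
  refine .inter (.iInter fun a => (isOpen_lt ?_ ?_).measurableSet)
    (.iInter fun m => IsOpen.measurableSet ?_)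
  · exact (continuous_apply a).comp continuous_snd
  · exact (continuous_apply (a + 1)).comp continuous_snd
  simp only [Set.ofPred_exists, Set.ofPred_and, Set.ofPred_forall]
  exact isOpen_iUnion fun x => isOpen_const.inter <| (Set.finite_Iic m).isOpen_biInter
    fun p _ => isOpen_lt continuous_const ((happ p x).sub (happ (p + 1) x)).norm

theorem analyticSet_setOf_cesaroBounded_and_nse [PolishSpace α]
    (hF : ∀ n x, Continuous fun a => cesaroMean (F a) n x) :
    MeasureTheory.AnalyticSet {a | CesaroBounded (F a) ∧ NSE (F a)} := by
  borelize (α × (ℕ → ℕ))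
  have hunion : {a | CesaroBounded (F a) ∧ NSE (F a)} = ⋃ M : ℕ, ⋃ k : ℕ, Prod.fst ''
      ({q : α × (ℕ → ℕ) | ∀ n x, ‖cesaroMean (F q.1) n x‖ ≤ M * ‖x‖} ∩
        {q | StrictMono q.2 ∧ ∀ m, ∃ x : X, ‖x‖ ≤ 1 ∧ ∀ p ≤ m, 1 / ((k : ℝ) + 1) <
          ‖cesaroMean (F q.1) (q.2 p) x - cesaroMean (F q.1) (q.2 (p + 1)) x‖}) := by
    ext a
    simp [cesaroBounded_iff_exists_nat, nse_iff_exists_nat]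
  rw [hunion]
  refine .iUnion fun M => .iUnion fun k => (MeasurableSet.analyticSet ?_).image_of_continuous
    continuous_fst
  exact ((isClosed_setOf_forall_norm_cesaroMean_le hF M).preimage
    continuous_fst).measurableSet.inter (measurableSet_setOf_nse_witness hF _)

end CesaroSets

section OperatorBall

variable {X : Type*} [NormedAddCommGroup X] [NormedSpace ℝ X] {c : ℝ}

attribute [local instance] sot

lemma isInducing_coeFn_opBall :
    Topology.IsInducing fun T : {T : X →L[ℝ] X // ‖T‖ ≤ c} => (T.1 : X → X) :=
  (Topology.IsInducing.induced _).comp Topology.IsInducing.subtypeVal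

lemma continuous_apply_opBall (x : X) :
    Continuous fun T : {T : X →L[ℝ] X // ‖T‖ ≤ c} => T.1 x :=
  (continuous_apply x).comp isInducing_coeFn_opBall.continuous

lemma norm_apply_sub_apply_le {S T : X →L[ℝ] X} (hS : ‖S‖ ≤ c) (hT : ‖T‖ ≤ c) (x z : X) :
    ‖S x - T x‖ ≤ ‖S z - T z‖ + 2 * c * ‖x - z‖ :=
  calc ‖S x - T x‖ = ‖(S - T) (x - z) + (S z - T z)‖ := by
        simp only [sub_apply, map_sub]; abel_nf
    _ ≤ ‖S - T‖ * ‖x - z‖ + ‖S z - T z‖ :=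
        (norm_add_le _ _).trans (by gcongr; exact (S - T).le_opNorm _)
    _ ≤ 2 * c * ‖x - z‖ + ‖S z - T z‖ := by
        gcongr
        linarith [norm_sub_le S T]
    _ = _ := add_comm _ _

lemma continuous_eval_opBall :
    Continuous fun p : {T : X →L[ℝ] X // ‖T‖ ≤ c} × X => p.1.1 p.2 := by
  refine continuous_iff_continuousAt.2 fun ⟨T, x⟩ => ?_
  have hbound (p : {T : X →L[ℝ] X // ‖T‖ ≤ c} × X) :
      ‖p.1.1 p.2 - T.1 x‖ ≤ c * ‖p.2 - x‖ + ‖p.1.1 x - T.1 x‖ :=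
    calc ‖p.1.1 p.2 - T.1 x‖ = ‖p.1.1 (p.2 - x) + (p.1.1 x - T.1 x)‖ := by
          rw [map_sub]; abel_nf
      _ ≤ ‖p.1.1‖ * ‖p.2 - x‖ + ‖p.1.1 x - T.1 x‖ :=
          (norm_add_le _ _).trans (by gcongr; exact p.1.1.le_opNorm _)
      _ ≤ c * ‖p.2 - x‖ + ‖p.1.1 x - T.1 x‖ := by gcongr; exact p.1.2
  have hlim : Tendsto (fun p : {T : X →L[ℝ] X // ‖T‖ ≤ c} × X =>
      c * ‖p.2 - x‖ + ‖p.1.1 x - T.1 x‖) (𝓝 (T, x)) (𝓝 0) := by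
    have hcont : Continuous fun p : {T : X →L[ℝ] X // ‖T‖ ≤ c} × X =>
        c * ‖p.2 - x‖ + ‖p.1.1 x - T.1 x‖ :=
      (continuous_const.mul (continuous_snd.sub continuous_const).norm).add
        (((continuous_apply_opBall x).comp continuous_fst).sub continuous_const).norm
    simpa using hcont.tendsto (T, x)
  exact tendsto_iff_norm_sub_tendsto_zero.2 (squeeze_zero (fun _ => norm_nonneg _) hbound hlim)

lemma continuous_pow_apply_opBall (k : ℕ) (x : X) :
    Continuous fun T : {T : X →L[ℝ] X // ‖T‖ ≤ c} => (T.1 ^ k) x := by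
  induction k with
  | zero => simpa using continuous_const
  | succ k ih =>
    simp only [pow_succ']
    exact continuous_eval_opBall.comp (continuous_id.prodMk ih)

lemma continuous_cesaroMean_apply_opBall (n : ℕ) (x : X) :
    Continuous fun T : {T : X →L[ℝ] X // ‖T‖ ≤ c} => cesaroMean T.1 n x := by
  simp only [cesaroMean, smul_apply, sum_apply]
  exact (continuous_finsetSum _ fun k _ => continuous_pow_apply_opBall k x).const_smul _

variable {d : ℕ → X}

lemma tendsto_apply_of_denseRange (hd : DenseRange d) {l : Filter {T : X →L[ℝ] X // ‖T‖ ≤ c}}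
    {T : X →L[ℝ] X} (h : ∀ i, Tendsto (fun S => S.1 (d i)) l (𝓝 (T (d i)))) (x : X) :
    Tendsto (fun S => S.1 x) l (𝓝 (T x)) := by
  have hequi : Equicontinuous fun S : {T : X →L[ℝ] X // ‖T‖ ≤ c} => ⇑S.1 :=
    (LipschitzWith.uniformEquicontinuous _ c.toNNReal fun S => S.1.lipschitz.weaken
      (norm_toNNReal.symm.trans_le (Real.toNNReal_le_toNNReal S.2))).equicontinuous
  exact (hequi.isClosed_setOfPred_tendsto T.continuous).closure_subset_iff.2
    (Set.range_subset_iff.2 h) (hd x)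

lemma cauchy_map_apply_of_denseRange (hd : DenseRange d)
    {l : Filter {T : X →L[ℝ] X // ‖T‖ ≤ c}} (h : ∀ i, Cauchy (map (fun S => S.1 (d i)) l))
    (x : X) : Cauchy (map (fun S => S.1 x) l) := by
  obtain ⟨hl, -⟩ := cauchy_map_iff.1 (h 0)
  obtain ⟨T⟩ := nonempty_of_neBot l
  have hc : 0 ≤ c := (norm_nonneg _).trans T.2
  refine cauchy_map_iff.2 ⟨hl, Metric.uniformity_basis_dist.tendsto_right_iff.2 fun ε hε => ?_⟩
  obtain ⟨i, hi⟩ := hd.exists_dist_lt x (show 0 < ε / (4 * (c + 1)) by positivity)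
  have hci : 2 * c * ‖x - d i‖ < ε / 2 := by
    rw [← dist_eq_norm]
    calc 2 * c * dist x (d i) ≤ 2 * c * (ε / (4 * (c + 1))) := by gcongr
      _ < ε / 2 := by field_simp; nlinarith
  filter_upwards [Metric.uniformity_basis_dist.tendsto_right_iff.1 (cauchy_map_iff.1 (h i)).2
    (ε / 2) (half_pos hε)] with p hp
  rw [dist_eq_norm] at hp ⊢
  linarith [norm_apply_sub_apply_le p.1.2 p.2.2 x (d i)]

def opBallRestrict (c : ℝ) (d : ℕ → X) : {T : X →L[ℝ] X // ‖T‖ ≤ c} → ℕ → X :=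
  fun T i => T.1 (d i)

lemma continuous_opBallRestrict : Continuous (opBallRestrict c d) :=
  continuous_pi fun i => continuous_apply_opBall (d i)

lemma injective_opBallRestrict (hd : DenseRange d) : Function.Injective (opBallRestrict c d) :=
  fun S T h => Subtype.ext <| DFunLike.coe_injective <| hd.equalizer S.1.continuous T.1.continuous h

lemma isInducing_opBallRestrict (hd : DenseRange d) : Topology.IsInducing (opBallRestrict c d) := by
  refine Topology.isInducing_iff_nhds.2 fun T =>
    le_antisymm (continuous_opBallRestrict.tendsto T).le_comap ?_
  exact (isInducing_coeFn_opBall.tendsto_nhds_iff (f := id)).2 <| tendsto_pi_nhds.2 <|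
    tendsto_apply_of_denseRange hd
      fun i => ((continuous_apply i).tendsto (opBallRestrict c d T)).comp tendsto_comap

lemma isClosed_range_opBallRestrict [CompleteSpace X] (hd : DenseRange d) :
    IsClosed (Set.range (opBallRestrict c d)) := by
  refine isClosed_of_closure_subset fun y hy => ?_
  set l := comap (opBallRestrict c d) (𝓝 y)
  have hl : l.NeBot := comap_neBot_iff.2 fun t ht =>
    let ⟨_, hzt, T, hTz⟩ := mem_closure_iff_nhds.1 hy t ht; ⟨T, hTz ▸ hzt⟩
  have hly (i : ℕ) : Tendsto (fun S => S.1 (d i)) l (𝓝 (y i)) :=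
    ((continuous_apply i).tendsto y).comp tendsto_comap
  have hcauchy : Cauchy (map (fun S => (S.1 : X → X)) l) :=
    (cauchy_pi_iff' _).2 fun x =>
      cauchy_map_apply_of_denseRange hd (fun i => (hly i).cauchy_map) x
  obtain ⟨g, hg⟩ := CompleteSpace.complete hcauchy
  obtain ⟨T, hT, rfl⟩ : g ∈ (⇑) '' Metric.closedBall (0 : X →L[ℝ] X) c :=
    (ContinuousLinearMap.isClosed_image_coe_closedBall 0 c).mem_of_tendsto hg
      (Eventually.of_forall fun S => ⟨S.1, mem_closedBall_zero_iff.2 S.2, rfl⟩)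
  refine ⟨⟨T, mem_closedBall_zero_iff.1 hT⟩, funext fun i => tendsto_nhds_unique ?_ (hly i)⟩
  exact ((continuous_apply (d i)).tendsto _).comp hg

lemma polishSpace_opBall [CompleteSpace X] [TopologicalSpace.SeparableSpace X] :
    PolishSpace {T : X →L[ℝ] X // ‖T‖ ≤ c} :=
  have hd := TopologicalSpace.denseRange_denseSeq X
  Topology.IsClosedEmbedding.polishSpace (f := opBallRestrict c (TopologicalSpace.denseSeq X))
    ⟨⟨isInducing_opBallRestrict hd, injective_opBallRestrict hd⟩, isClosed_range_opBallRestrict hd⟩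

end OperatorBall

theorem stmt_8_general (X : Type*) [NormedAddCommGroup X] [NormedSpace ℝ X] [CompleteSpace X]
    [TopologicalSpace.SeparableSpace X] (n : ℕ) :
    @MeasureTheory.AnalyticSet {T : X →L[ℝ] X // ‖T‖ ≤ (n : ℝ)}
      (TopologicalSpace.induced (fun T => T.1) (sot X))
      {T : {T : X →L[ℝ] X // ‖T‖ ≤ (n : ℝ)} | CesaroBounded T.1 ∧ NSE T.1} := by
  let := sot X
  have := polishSpace_opBall (X := X) (c := n)
  exact analyticSet_setOf_cesaroBounded_and_nse continuous_cesaroMean_apply_opBall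

/-- For a separable Banach space `X` and `n ≥ 1`, the set of Cesàro-bounded operators of
norm `≤ n` satisfying (NSE) is analytic in the Polish space of operators of norm at most `n`
with the strong operator topology (equivalently, the super-ergodic ones are coanalytic). -/
theorem stmt_8 (X : Type*) [NormedAddCommGroup X] [NormedSpace ℝ X] [CompleteSpace X]
    [TopologicalSpace.SeparableSpace X] (n : ℕ) (hn : 1 ≤ n) :
    @MeasureTheory.AnalyticSet {T : X →L[ℝ] X // ‖T‖ ≤ (n : ℝ)}
      (TopologicalSpace.induced (fun T => T.1) (sot X))
      {T : {T : X →L[ℝ] X // ‖T‖ ≤ (n : ℝ)} | CesaroBounded T.1 ∧ NSE T.1} :=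
  stmt_8_general X n
end

section
/- Let P be a Polish space and ψ a map from P into the set of trees on ℕ such that for every finite sequence s of natural numbers the set {x ∈ P : s ∈ ψ(x)} is Borel in P. If A is an analytic subset of P such that ψ(x) is well-founded for every x ∈ A, then there exists a countable ordinal α such that the height h(ψ(x)) ≤ α for all x ∈ A. -/
open Filter Topology

/-!
Kunen–Martin. With `A = range f` for a continuous `f` on Baire space, the relations
`treeRel (ψ (f y))` have analytic graphs, i.e. projections of closed sets. Finite descending
chains, paired with initial segments of a code for `y` and for witnesses of each step, form a
relation on a countable set that is still well-founded: an infinite descent yields codes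
converging to one that, the conditions being closed, realizes an infinite descending chain in a
single tree. Heights are dominated by ranks in this countable relation, all of which are `< ω₁`.
-/

open MeasureTheory Ordinal

theorem Acc.rank_lt_omega_one {α : Type*} [Countable α] {r : α → α → Prop} {a : α}
    (h : Acc r a) : h.rank < ω₁ := by
  induction h with
  | intro a _ ih =>
    rw [Acc.rank_eq]
    refine Ordinal.iSup_lt_omega_one fun b => ?_
    exact (Cardinal.isSuccLimit_omega 1).succ_lt (ih b.1 b.2)

theorem List.exists_getElem_eq_of_isPrefix {α : Type*} (L : ℕ → List α)
    (hL : ∀ m, L m <+: L (m + 1)) (hlen : ∀ m, m ≤ (L m).length) :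
    ∃ z : ℕ → α, ∀ m j (hj : j < (L m).length), z j = (L m)[j] := by
  have hmono := Nat.rel_of_forall_rel_succ_of_le (· <+: ·) hL
  refine ⟨fun j => (L (j + 1))[j]'(hlen (j + 1)), fun m j hj => ?_⟩
  rcases le_total m (j + 1) with h | h
  · exact ((hmono h).getElem hj).symm
  · exact (hmono h).getElem _

theorem MeasureTheory.AnalyticSet.exists_isClosed_image_fst {α : Type*} [TopologicalSpace α]
    [T2Space α] {s : Set α} (hs : AnalyticSet s) :
    ∃ F : Set (α × (ℕ → ℕ)), IsClosed F ∧ Prod.fst '' F = s := by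
  rw [AnalyticSet] at hs
  rcases hs with rfl | ⟨g, hg, rfl⟩
  · exact ⟨∅, isClosed_empty, Set.image_empty _⟩
  · refine ⟨{p | g p.2 = p.1}, isClosed_eq (hg.comp continuous_snd) continuous_fst, ?_⟩
    ext y
    simp [eq_comm]

namespace KunenMartin

def slice (z : ℕ → ℕ) (k : ℕ) : ℕ → ℕ := fun j => z (Nat.pair k j)

theorem continuous_slice (k : ℕ) : Continuous fun z : ℕ → ℕ => slice z k :=
  continuous_pi fun _ => continuous_apply _

variable {I : Type*} (F : I × I → Set ((ℕ → ℕ) × (ℕ → ℕ))) (e : I × I → ℕ)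

/-- `z` packs the point `slice z 0` and, for each pair `p`, a witness `slice z (e p + 1)` that
this point lies in the projection of `F p`. -/
def IsCode (z : ℕ → ℕ) (c : List I) : Prop :=
  c.IsChain fun a b => (slice z 0, slice z (e (a, b) + 1)) ∈ F (a, b)

def Realizable (N : List I × List ℕ) : Prop :=
  ∃ z : ℕ → ℕ, (∀ j (hj : j < N.2.length), z j = N.2[j]) ∧ IsCode F e z N.1

/-- The Kunen–Martin tree: a node is a chain (newest element first) together with an initial
segment of a code realizing it. -/
def Extends (N' N : List I × List ℕ) : Prop :=
  Realizable F e N' ∧ ∃ a n, N' = (a :: N.1, N.2 ++ [n])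

variable {F e} {r : (ℕ → ℕ) → I → I → Prop}

theorem wellFounded_extends (hF : ∀ p, IsClosed (F p))
    (hrF : ∀ y a b, r y a b ↔ ∃ w, (y, w) ∈ F (a, b)) (hwf : ∀ y, WellFounded (r y)) :
    WellFounded (Extends F e) := by
  rw [wellFounded_iff_isEmpty_descending_chain]
  refine ⟨fun ⟨N, hN⟩ => ?_⟩
  choose hreal a n hstep using hN
  choose zs hzs hcode using hreal
  have hlen : ∀ m, m ≤ (N m).2.length := by
    intro m
    induction m with
    | zero => exact Nat.zero_le _
    | succ m ih => rw [hstep m, List.length_append, List.length_singleton]; omega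
  obtain ⟨z, hz⟩ := List.exists_getElem_eq_of_isPrefix (fun m => (N m).2)
    (fun m => by rw [hstep m]; exact List.prefix_append _ _) hlen
  have hlim : Filter.Tendsto zs Filter.atTop (𝓝 z) := by
    refine tendsto_pi_nhds.2 fun j => tendsto_const_nhds.congr' ?_
    filter_upwards [Filter.eventually_ge_atTop j] with m hm
    have hj : j < (N (m + 1)).2.length := (hlen (m + 1)).trans_lt' (by omega)
    rw [hz _ _ hj, hzs m j hj]
  have hsuffix := Nat.rel_of_forall_rel_succ_of_le (· <:+ ·) fun m =>
    (hstep m ▸ List.suffix_cons (a m) (N m).1 : (N m).1 <:+ (N (m + 1)).1)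
  have hstep2 : ∀ k, (N (k + 2)).1 = a (k + 1) :: a k :: (N k).1 := fun k => by
    rw [hstep, hstep]
  -- Each step of the chain `a` is a closed condition on codes, satisfied by `zs m` for large `m`.
  refine (wellFounded_iff_isEmpty_descending_chain.1 (hwf (slice z 0))).false ⟨a, fun k => ?_⟩
  rw [hrF]
  refine ⟨slice z (e (a (k + 1), a k) + 1), ?_⟩
  refine ((hF _).preimage ((continuous_slice 0).prodMk (continuous_slice _))).mem_of_tendsto
    hlim ?_
  filter_upwards [Filter.eventually_ge_atTop (k + 1)] with m hm
  have := (hcode m).suffix (hsuffix (show k + 2 ≤ m + 1 by omega))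
  rw [hstep2, List.isChain_cons_cons] at this
  exact this.1

variable (F e) in
noncomputable def code (y : ℕ → ℕ) : ℕ → ℕ := fun n =>
  if n.unpair.1 = 0 then y n.unpair.2
  else Function.extend e (fun p => Classical.epsilon fun w => (y, w) ∈ F p) 0
    (n.unpair.1 - 1) n.unpair.2

theorem isCode_code (he : Function.Injective e)
    (hrF : ∀ y a b, r y a b ↔ ∃ w, (y, w) ∈ F (a, b)) {y : ℕ → ℕ} {c : List I}
    (hc : c.IsChain (r y)) : IsCode F e (code F e y) c := by
  refine hc.imp fun a b hab => ?_
  have hslice0 : slice (code F e y) 0 = y := by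
    ext j
    simp [slice, code]
  have hslice : slice (code F e y) (e (a, b) + 1) =
      Classical.epsilon fun w => (y, w) ∈ F (a, b) := by
    ext j
    simp [slice, code, he.extend_apply]
  rw [hslice0, hslice]
  exact Classical.epsilon_spec ((hrF y a b).1 hab)

variable (F e) in
noncomputable def node (y : ℕ → ℕ) (c : List I) : List I × List ℕ :=
  (c, (List.range c.length).map (code F e y))

theorem extends_node_cons (he : Function.Injective e)
    (hrF : ∀ y a b, r y a b ↔ ∃ w, (y, w) ∈ F (a, b)) {y : ℕ → ℕ} {b : I} {c : List I}
    (hc : (b :: c).IsChain (r y)) : Extends F e (node F e y (b :: c)) (node F e y c) :=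
  ⟨⟨code F e y, by simp [node], isCode_code he hrF hc⟩, b, code F e y c.length,
    by simp [node, List.range_succ]⟩

theorem rank_le_rank_node (hR : WellFounded (Extends F e)) (he : Function.Injective e)
    (hrF : ∀ y a b, r y a b ↔ ∃ w, (y, w) ∈ F (a, b)) {y : ℕ → ℕ} {a : I}
    (ha : Acc (r y) a) :
    ∀ c, (a :: c).IsChain (r y) → ha.rank ≤ (hR.apply (node F e y (a :: c))).rank := by
  induction ha with
  | intro a _ ih =>
    intro c hc
    rw [Acc.rank_eq]
    refine Ordinal.iSup_le fun ⟨b, hb⟩ => Order.succ_le_of_lt ?_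
    have hbc : (b :: a :: c).IsChain (r y) := List.isChain_cons_cons.2 ⟨hb, hc⟩
    exact (ih b hb _ hbc).trans_lt (Acc.rank_lt_of_rel _ (extends_node_cons he hrF hbc))

theorem exists_lt_omega_one_rank_le [Countable I] (he : Function.Injective e)
    (hF : ∀ p, IsClosed (F p)) (hrF : ∀ y a b, r y a b ↔ ∃ w, (y, w) ∈ F (a, b))
    (hwf : ∀ y, WellFounded (r y)) :
    ∃ α < ω₁, ∀ y a, ((hwf y).apply a).rank ≤ α := by
  have hR := wellFounded_extends (e := e) hF hrF hwf
  refine ⟨⨆ N, (hR.apply N).rank, iSup_lt_omega_one fun N => (hR.apply N).rank_lt_omega_one,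
    fun y a => ?_⟩
  exact (rank_le_rank_node hR he hrF _ [] (List.isChain_singleton a)).trans (Ordinal.le_iSup _ _)

end KunenMartin

theorem exists_lt_omega_one_rank_le_of_analyticSet {I : Type*} [Countable I]
    (r : (ℕ → ℕ) → I → I → Prop) (hr : ∀ a b, AnalyticSet {y | r y a b})
    (hwf : ∀ y, WellFounded (r y)) : ∃ α < ω₁, ∀ y a, ((hwf y).apply a).rank ≤ α := by
  obtain ⟨e, he⟩ := Countable.exists_injective_nat (I × I)
  choose F hF hFr using fun p : I × I => (hr p.1 p.2).exists_isClosed_image_fst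
  refine KunenMartin.exists_lt_omega_one_rank_le he hF (fun y a b => ?_) hwf
  simpa using (Set.ext_iff.1 (hFr (a, b)) y).symm

theorem TreeWF.wellFounded_treeRel {𝒜 : Set (List ℕ)}
    (h𝒜 : ∀ s t : List ℕ, s <+: t → t ∈ 𝒜 → s ∈ 𝒜) (hwf : TreeWF 𝒜) :
    WellFounded (treeRel 𝒜) := by
  rw [wellFounded_iff_isEmpty_descending_chain]
  refine ⟨fun ⟨S, hS⟩ => hwf ?_⟩
  have hlen : ∀ m, m ≤ (S m).length := by
    intro m
    induction m with
    | zero => exact Nat.zero_le _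
    | succ m ih =>
      obtain ⟨-, -, hpre, hne⟩ := hS m
      exact ih.trans_lt (hpre.length_le.lt_of_ne fun h => hne (hpre.eq_of_length h))
  obtain ⟨J, hJ⟩ := List.exists_getElem_eq_of_isPrefix S (fun m => (hS m).2.2.1) hlen
  refine ⟨J, fun m => h𝒜 _ (S m) ?_ (hS m).1⟩
  rw [List.prefix_iff_eq_take]
  refine List.ext_getElem (by simpa using hlen m) fun j hj _ => ?_
  rw [List.length_map, List.length_range] at hj
  simp [hJ m j (hj.trans_le (hlen m))]

theorem treeHeight_eq_rank {𝒜 : Set (List ℕ)} (h : WellFounded (treeRel 𝒜)) :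
    treeHeight 𝒜 = (h.apply []).rank :=
  dif_pos h

theorem measurableSet_setOf_treeRel {P : Type*} [MeasurableSpace P] {ψ : P → Set (List ℕ)}
    (hψ : ∀ s, MeasurableSet {x | s ∈ ψ x}) (t s : List ℕ) :
    MeasurableSet {x | treeRel (ψ x) t s} := by
  simp only [treeRel, Set.ofPred_and]
  exact (hψ s).inter ((hψ t).inter ((MeasurableSet.const _).inter (MeasurableSet.const _)))

theorem stmt_10_general (P : Type*) [TopologicalSpace P]
    [MeasurableSpace P] [BorelSpace P]
    (ψ : P → Set (List ℕ))
    (htree : ∀ x : P, ∀ s t : List ℕ, s <+: t → t ∈ ψ x → s ∈ ψ x)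
    (hborel : ∀ s : List ℕ, MeasurableSet {x : P | s ∈ ψ x})
    (A : Set P) (hA : MeasureTheory.AnalyticSet A)
    (hwf : ∀ x ∈ A, TreeWF (ψ x)) :
    ∃ α : Ordinal, α < (Cardinal.aleph 1).ord ∧ ∀ x ∈ A, treeHeight (ψ x) ≤ α := by
  rw [Cardinal.ord_aleph]
  rw [AnalyticSet] at hA
  rcases hA with rfl | ⟨f, hf, rfl⟩
  · exact ⟨0, omega_pos 1, by simp⟩
  have hwf' : ∀ y, WellFounded (treeRel (ψ (f y))) := fun y =>
    (hwf _ ⟨y, rfl⟩).wellFounded_treeRel (htree _)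
  obtain ⟨α, hα, hle⟩ := exists_lt_omega_one_rank_le_of_analyticSet _
    (fun t s => ((measurableSet_setOf_treeRel hborel t s).preimage hf.measurable).analyticSet)
    hwf'
  refine ⟨α, hα, ?_⟩
  rintro _ ⟨y, rfl⟩
  rw [treeHeight_eq_rank (hwf' y)]
  exact hle y []

/-- Boundedness of a coanalytic rank on analytic sets: if `ψ` maps a Polish space into trees
on `ℕ`, each `{x | s ∈ ψ x}` is Borel, and `A` is an analytic set on which every `ψ x` is
well-founded, then the heights `h(ψ x)` for `x ∈ A` are bounded by a countable ordinal. -/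
theorem stmt_10 (P : Type*) [TopologicalSpace P] [PolishSpace P]
    [MeasurableSpace P] [BorelSpace P]
    (ψ : P → Set (List ℕ))
    (htree : ∀ x : P, ∀ s t : List ℕ, s <+: t → t ∈ ψ x → s ∈ ψ x)
    (hborel : ∀ s : List ℕ, MeasurableSet {x : P | s ∈ ψ x})
    (A : Set P) (hA : MeasureTheory.AnalyticSet A)
    (hwf : ∀ x ∈ A, TreeWF (ψ x)) :
    ∃ α : Ordinal, α < (Cardinal.aleph 1).ord ∧ ∀ x ∈ A, treeHeight (ψ x) ≤ α :=
  stmt_10_general P ψ htree hborel A hA hwf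
end

section
/- Let X be a separable Banach space. There exists a countable ordinal α such that for every uniformly ergodic operator T on X and every ε > 0, the tree 𝒜_e(T,ε) is well-founded and its height satisfies h(𝒜_e(T,ε)) ≤ α. -/
open Filter Topology

/-!
Uniform ergodicity makes `(A_n)` Cauchy in operator norm, so for `n, m ≥ N` we have
`‖A_n x - A_m x‖ ≤ ε` on the unit ball. A strictly increasing sequence has `s_p ≥ p`, so no
node of `𝒜_e(T, ε)` has more than `N + 1` entries. A tree of uniformly bounded length is
well-founded of finite height, and `ω` is countable.
-/

theorem Acc.rank_le_of_rel_lt {α : Type*} {r : α → α → Prop} (f : α → Ordinal)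
    (hf : ∀ a b, r b a → f b < f a) {a : α} (ha : Acc r a) : ha.rank ≤ f a := by
  induction ha with
  | intro a _ ih =>
    rw [Acc.rank_eq]
    exact Ordinal.iSup_le fun ⟨b, hb⟩ => Order.succ_le_of_lt ((ih b hb).trans_lt (hf a b hb))

theorem List.le_getD_of_isChain_lt {s : List ℕ} (hs : s.IsChain (· < ·)) :
    ∀ p < s.length, p ≤ s.getD p 0 := by
  intro p
  induction p with
  | zero => intro _; exact Nat.zero_le _
  | succ q ih =>
    intro hq
    have hstep : s.getD q 0 < s.getD (q + 1) 0 := by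
      rw [List.getD_eq_getElem (hn := by omega), List.getD_eq_getElem (hn := hq)]
      exact List.isChain_iff_getElem.mp hs q hq
    have := ih (by omega)
    omega

section Trees

variable {𝒜 : Set (List ℕ)} {L : ℕ}

theorem treeRel.length_lt {t s : List ℕ} (h : treeRel 𝒜 t s) : s.length < t.length :=
  h.2.2.1.length_le.lt_of_ne fun hlen => h.2.2.2 (h.2.2.1.eq_of_length hlen)

theorem treeRel.sub_length_lt (hL : ∀ s ∈ 𝒜, s.length ≤ L) {t s : List ℕ}
    (h : treeRel 𝒜 t s) : L - t.length < L - s.length := by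
  have := h.length_lt
  have := hL t h.2.1
  omega

theorem treeWF_of_length_le (hL : ∀ s ∈ 𝒜, s.length ≤ L) : TreeWF 𝒜 := by
  rintro ⟨J, hJ⟩
  simpa using hL _ (hJ (L + 1))

theorem wellFounded_treeRel_of_length_le (hL : ∀ s ∈ 𝒜, s.length ≤ L) :
    WellFounded (treeRel 𝒜) :=
  Subrelation.wf (fun h => treeRel.sub_length_lt hL h)
    (InvImage.wf (fun s : List ℕ => L - s.length) wellFounded_lt)

theorem treeHeight_le_of_length_le (hL : ∀ s ∈ 𝒜, s.length ≤ L) : treeHeight 𝒜 ≤ L := by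
  have hwf := wellFounded_treeRel_of_length_le hL
  rw [treeHeight, dif_pos hwf]
  simpa using (hwf.apply []).rank_le_of_rel_lt
    (fun s : List ℕ => ((L - s.length : ℕ) : Ordinal))
    fun s t h => by exact_mod_cast treeRel.sub_length_lt hL h

end Trees

section Ergodic

variable {X : Type*} [NormedAddCommGroup X] [NormedSpace ℝ X] {T : X →L[ℝ] X} {ε : ℝ}

theorem ergoTree_length_le {N : ℕ}
    (hN : ∀ n ≥ N, ∀ m ≥ N, ‖cesaroMean T n - cesaroMean T m‖ ≤ ε) :
    ∀ s ∈ ergoTree T ε, s.length ≤ N + 1 := by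
  rintro s ⟨hchain, hshort | ⟨x, hx, hsep⟩⟩
  · omega
  by_contra! hlong
  have hfar : ‖(cesaroMean T (s.getD N 0) - cesaroMean T (s.getD (N + 1) 0)) x‖ ≤ ε * 1 :=
    ContinuousLinearMap.le_of_opNorm_le_of_le _
      (hN _ (List.le_getD_of_isChain_lt hchain N (by omega))
        _ (by have := List.le_getD_of_isChain_lt hchain (N + 1) hlong; omega)) hx
  rw [mul_one, sub_apply] at hfar
  exact (hsep N hlong).not_ge hfar

theorem IsUniformlyErgodicOp.exists_ergoTree_length_le (hT : IsUniformlyErgodicOp T)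
    (hε : 0 < ε) : ∃ L : ℕ, ∀ s ∈ ergoTree T ε, s.length ≤ L := by
  obtain ⟨A, hA⟩ := hT
  obtain ⟨N, hN⟩ := Metric.cauchySeq_iff.mp hA.cauchySeq ε hε
  exact ⟨N + 1, ergoTree_length_le fun n hn m hm => by
    simpa [dist_eq_norm] using (hN n hn m hm).le⟩

end Ergodic

theorem stmt_12_general (X : Type*) [NormedAddCommGroup X] [NormedSpace ℝ X] :
    ∃ α : Ordinal, α < (Cardinal.aleph 1).ord ∧
      ∀ T : X →L[ℝ] X, IsUniformlyErgodicOp T → ∀ ε : ℝ, 0 < ε →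
        TreeWF (ergoTree T ε) ∧ treeHeight (ergoTree T ε) ≤ α := by
  refine ⟨Ordinal.omega0, ?_, fun T hT ε hε => ?_⟩
  · simp
  obtain ⟨L, hL⟩ := hT.exists_ergoTree_length_le hε
  exact ⟨treeWF_of_length_le hL,
    (treeHeight_le_of_length_le hL).trans (Ordinal.natCast_lt_omega0 L).le⟩

/-- For a separable Banach space `X`, there is a countable ordinal `α` such that for every
uniformly ergodic `T` and every `ε > 0` the tree `𝒜_e(T, ε)` is well-founded with height
at most `α`. -/
theorem stmt_12 (X : Type*) [NormedAddCommGroup X] [NormedSpace ℝ X] [CompleteSpace X]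
    [TopologicalSpace.SeparableSpace X] :
    ∃ α : Ordinal, α < (Cardinal.aleph 1).ord ∧
      ∀ T : X →L[ℝ] X, IsUniformlyErgodicOp T → ∀ ε : ℝ, 0 < ε →
        TreeWF (ergoTree T ε) ∧ treeHeight (ergoTree T ε) ≤ α :=
  stmt_12_general X
end

section
/- Let X be a separable Banach space. Exactly one of the following holds: either (i) there exists an ergodic operator T on X that satisfies condition (NSE) (i.e., an ergodic operator that is not super-ergodic); or (ii) there exists a countable ordinal α such that every ergodic operator T on X fails (NSE) and for every ε > 0 the tree 𝒜_e(T,ε) is well-founded with height h(𝒜_e(T,ε)) ≤ α. -/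
open Filter Topology

section RankMachinery

open Classical in
/-- Total rank function: rank if well-founded, else 0. -/
noncomputable def rnk {α : Type} (r : α → α → Prop) (a : α) : Ordinal :=
  if h : WellFounded r then (h.apply a).rank else 0

theorem rnk_of_wf {α : Type} {r : α → α → Prop} (h : WellFounded r) (a : α) :
    rnk r a = (h.apply a).rank := dif_pos h

theorem rnk_of_not_wf {α : Type} {r : α → α → Prop} (h : ¬ WellFounded r) (a : α) :
    rnk r a = 0 := dif_neg h

theorem treeHeight_eq_rnk (𝒜 : Set (List ℕ)) : treeHeight 𝒜 = rnk (treeRel 𝒜) [] := by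
  by_cases h : WellFounded (treeRel 𝒜)
  · rw [treeHeight, dif_pos h, rnk_of_wf h]
  · rw [treeHeight, dif_neg h, rnk_of_not_wf h]

theorem exists_descending_of_not_wf {α : Type*} {r : α → α → Prop} (h : ¬ WellFounded r) :
    ∃ f : ℕ → α, ∀ n, r (f (n + 1)) (f n) := by
  have h1 : ∃ a, ¬ Acc r a := by
    by_contra hc
    push_neg at hc
    exact h ⟨hc⟩
  have h2 : ∀ a : {a : α // ¬ Acc r a}, ∃ b : {a : α // ¬ Acc r a}, r b.1 a.1 := by
    rintro ⟨a, ha⟩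
    by_contra hc
    push_neg at hc
    exact ha (Acc.intro a (fun b hb => by
      by_contra hb'
      exact hc ⟨b, hb'⟩ hb))
  choose g hg using h2
  obtain ⟨a0, ha0⟩ := h1
  refine ⟨fun n => (g^[n] ⟨a0, ha0⟩).1, fun n => ?_⟩
  have : g^[n+1] ⟨a0, ha0⟩ = g (g^[n] ⟨a0, ha0⟩) := Function.iterate_succ_apply' g n _
  simp only [this]
  exact hg _

theorem acc_rank_le_of_hom {α β : Type} {r : α → α → Prop} {R : β → β → Prop}
    (hR : WellFounded R) (f : α → β) (hf : ∀ ⦃a b : α⦄, r b a → R (f b) (f a))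
    (hr : WellFounded r) (a : α) : (hr.apply a).rank ≤ (hR.apply (f a)).rank := by
  induction a using hr.induction with
  | _ a IH =>
    rw [Acc.rank_eq]
    refine Ordinal.iSup_le ?_
    rintro ⟨b, hb⟩
    have h1 : ((hr.apply a).inv hb).rank = (hr.apply b).rank := rfl
    rw [h1, Order.succ_le_iff]
    calc (hr.apply b).rank ≤ (hR.apply (f b)).rank := IH b hb
    _ < (hR.apply (f a)).rank := by
        have h2 := Acc.rank_lt_of_rel (hR.apply (f a)) (hf hb)
        exact h2

theorem rnk_le_of_hom {α β : Type} {r : α → α → Prop} {R : β → β → Prop}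
    (hR : WellFounded R) (f : α → β) (hf : ∀ ⦃a b : α⦄, r b a → R (f b) (f a)) (a : α) :
    rnk r a ≤ rnk R (f a) := by
  have hr : WellFounded r := Subrelation.wf (fun {x y} hxy => hf hxy) (InvImage.wf f hR)
  rw [rnk_of_wf hr, rnk_of_wf hR]
  exact acc_rank_le_of_hom hR f hf hr a

theorem rnk_lt_omega1 {α : Type} [Countable α] {r : α → α → Prop}
    (h : WellFounded r) (a : α) : rnk r a < (Cardinal.aleph 1).ord := by
  rw [rnk_of_wf h]
  induction a using h.induction with
  | _ a IH =>
    rw [Acc.rank_eq]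
    rw [Cardinal.ord_aleph]
    apply Ordinal.iSup_lt_omega_one
    rintro ⟨b, hb⟩
    have h1 : ((h.apply a).inv hb).rank = (h.apply b).rank := rfl
    rw [h1, ← Cardinal.ord_aleph]
    have hlim : Order.IsSuccLimit ((Cardinal.aleph 1).ord) := Cardinal.isSuccLimit_ord (Cardinal.aleph0_le_aleph 1)
    exact hlim.succ_lt (IH b hb)

end RankMachinery
section ListTree

variable {X : Type*} [NormedAddCommGroup X] [NormedSpace ℝ X]

theorem getD_map_range (J : ℕ → ℕ) {m p : ℕ} (h : p < m) :
    ((List.range m).map J).getD p 0 = J p := by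
  have hlen : ((List.range m).map J).length = m := by simp
  rw [List.getD_eq_getElem _ _ (by omega)]
  simp

theorem getD_of_prefix {a b : List ℕ} (h : a <+: b) {p : ℕ} (hp : p < a.length) :
    a.getD p 0 = b.getD p 0 := by
  rw [List.getD_eq_getElem _ _ hp, List.getD_eq_getElem _ _ (hp.trans_le h.length_le)]
  exact h.getElem hp

theorem ergoTree_prefix_closed {T : X →L[ℝ] X} {ε : ℝ} {s t : List ℕ}
    (hpre : t <+: s) (hs : s ∈ ergoTree T ε) : t ∈ ergoTree T ε := by
  obtain ⟨hchain, hrest⟩ := hs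
  refine ⟨hchain.prefix hpre, ?_⟩
  rcases hrest with hlen | ⟨x, hx, hvals⟩
  · exact Or.inl (le_trans hpre.length_le hlen)
  · by_cases hlt : t.length ≤ 1
    · exact Or.inl hlt
    · refine Or.inr ⟨x, hx, fun p hp => ?_⟩
      have hts := hpre.length_le
      rw [getD_of_prefix hpre (by omega), getD_of_prefix hpre hp]
      exact hvals p (by omega)

theorem ergoTree_mono {T : X →L[ℝ] X} {ε q : ℝ} (h : q ≤ ε) :
    ergoTree T ε ⊆ ergoTree T q := by
  rintro s ⟨hchain, hrest⟩
  refine ⟨hchain, ?_⟩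
  rcases hrest with hlen | ⟨x, hx, hvals⟩
  · exact Or.inl hlen
  · exact Or.inr ⟨x, hx, fun p hp => lt_of_le_of_lt h (hvals p hp)⟩

/-- From an infinite strictly increasing chain of prefixes in the tree, we get (NSE). -/
theorem nse_of_chain {T : X →L[ℝ] X} {q : ℝ} (hq : 0 < q) (s : ℕ → List ℕ)
    (hmem : ∀ n, s n ∈ ergoTree T q) (hpre : ∀ n, s n <+: s (n + 1))
    (hne : ∀ n, s n ≠ s (n + 1)) : NSE T := by
  have hlen : ∀ n, (s n).length < (s (n + 1)).length := by
    intro n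
    rcases lt_or_eq_of_le (hpre n).length_le with h | h
    · exact h
    · exact absurd ((hpre n).eq_of_length h) (hne n)
  have hlen' : ∀ n, n ≤ (s n).length := by
    intro n
    induction n with
    | zero => omega
    | succ k ih => have := hlen k; omega
  have hpre' : ∀ m n, m ≤ n → s m <+: s n := by
    intro m n h
    induction n with
    | zero => have : m = 0 := by omega
              subst this; exact List.prefix_refl _
    | succ k ih =>
        rcases Nat.lt_or_ge m (k+1) with h' | h'
        · exact (ih (by omega)).trans (hpre k)
        · have : m = k + 1 := by omega
          subst this; exact List.prefix_refl _
  set J : ℕ → ℕ := fun n => (s (n + 1)).getD n 0 with hJ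
  have hJs : ∀ n m, n < (s m).length → (s m).getD n 0 = J n := by
    intro n m hn
    rcases le_or_gt m (n + 1) with h | h
    · exact getD_of_prefix (hpre' m (n+1) h) hn
    · exact (getD_of_prefix (hpre' (n+1) m (by omega)) (by have := hlen' (n+1); omega)).symm
  have htake : ∀ m, (List.range m).map J = (s m).take m := by
    intro m
    apply List.ext_getElem
    · simp [Nat.min_eq_left (hlen' m)]
    · intro i h1 h2
      have hi : i < m := by simpa using h1
      have hi' : i < (s m).length := by have := hlen' m; omega
      rw [List.getElem_take]
      have e1 : ((List.range m).map J)[i] = J i := by simp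
      rw [e1]
      rw [← hJs i m hi']
      exact List.getD_eq_getElem _ _ hi'
  have hmem' : ∀ m, (List.range m).map J ∈ ergoTree T q := by
    intro m
    rw [htake m]
    exact ergoTree_prefix_closed (List.take_prefix _ _) (hmem m)
  refine ⟨q, hq, J, ?_, ?_⟩
  · apply strictMono_nat_of_lt_succ
    intro n
    have hc : ((List.range (n+2)).map J).Chain' (· < ·) := (hmem' (n+2)).1
    rw [List.Chain', List.isChain_iff_getElem] at hc
    have hlen2 : ((List.range (n+2)).map J).length = n + 2 := by simp
    have := hc n (by omega)
    simpa using this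
  · intro m
    have hm := hmem' (m + 2)
    rcases hm.2 with hl | ⟨x, hx, hvals⟩
    · simp at hl
    · refine ⟨x, hx, fun p hp => ?_⟩
      have h1 := hvals p (by simp; omega)
      rwa [getD_map_range J (by omega), getD_map_range J (by omega)] at h1

theorem treeWF_of_not_nse {T : X →L[ℝ] X} {q : ℝ} (hq : 0 < q) (h : ¬ NSE T) :
    TreeWF (ergoTree T q) := by
  rintro ⟨J, hJ⟩
  refine h (nse_of_chain hq (fun m => (List.range m).map J) hJ ?_ ?_)
  · intro n
    refine ⟨[J n], ?_⟩
    simp [List.range_succ]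
  · intro n
    intro hcontra
    have := congrArg List.length hcontra
    simp at this
theorem wf_treeRel_of_not_nse {T : X →L[ℝ] X} {q : ℝ} (hq : 0 < q) (h : ¬ NSE T) :
    WellFounded (treeRel (ergoTree T q)) := by
  by_contra hwf
  obtain ⟨f, hf⟩ := exists_descending_of_not_wf hwf
  exact h (nse_of_chain hq f (fun n => (hf n).1) (fun n => (hf n).2.2.1) (fun n => (hf n).2.2.2))

end ListTree
section Analysis

set_option linter.unusedSectionVars false

variable {X : Type*} [NormedAddCommGroup X] [NormedSpace ℝ X]

theorem cesaroMean_apply (T : X →L[ℝ] X) (n : ℕ) (x : X) :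
    cesaroMean T n x = (n : ℝ)⁻¹ • ∑ k ∈ Finset.range n, (T ^ k) x := by
  rw [cesaroMean, ContinuousLinearMap.smul_apply, ContinuousLinearMap.sum_apply]

theorem cauchySeq_of_dense {S : ℕ → X →L[ℝ] X} {M : ℝ} (hM : ∀ n, ‖S n‖ ≤ M)
    {y : ℕ → X} (hy : DenseRange y) (hC : ∀ i, CauchySeq fun n => S n (y i)) (x : X) :
    CauchySeq fun n => S n x := by
  have hM0 : 0 ≤ M := le_trans (norm_nonneg _) (hM 0)
  rw [Metric.cauchySeq_iff]
  intro ε hε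
  have hε3 : 0 < ε / (3 * (M + 1)) := by positivity
  obtain ⟨i, hi⟩ := Metric.denseRange_iff.1 hy x _ hε3
  obtain ⟨N, hN⟩ := Metric.cauchySeq_iff.1 (hC i) (ε / 3) (by positivity)
  refine ⟨N, fun m hm n hn => ?_⟩
  have e1 : S m x - S n x = S m (x - y i) + (S m (y i) - S n (y i)) + S n (y i - x) := by
    simp only [map_sub]; abel
  have h2 : ‖S m (x - y i)‖ ≤ M * (ε / (3 * (M + 1))) := by
    refine le_trans ((S m).le_opNorm _) ?_
    have hd : ‖x - y i‖ ≤ ε / (3 * (M + 1)) := by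
      rw [← dist_eq_norm]; exact le_of_lt hi
    exact mul_le_mul (hM m) hd (norm_nonneg _) hM0
  have h3 : ‖S n (y i - x)‖ ≤ M * (ε / (3 * (M + 1))) := by
    refine le_trans ((S n).le_opNorm _) ?_
    have hd : ‖y i - x‖ ≤ ε / (3 * (M + 1)) := by
      rw [norm_sub_rev, ← dist_eq_norm]; exact le_of_lt hi
    exact mul_le_mul (hM n) hd (norm_nonneg _) hM0
  have h4 := hN m hm n hn
  rw [dist_eq_norm] at h4
  have h5 : M * (ε / (3 * (M + 1))) ≤ ε / 3 := by
    rw [← mul_div_assoc, div_le_div_iff₀ (by positivity) (by norm_num : (0:ℝ) < 3)]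
    nlinarith [hM0, hε.le]
  rw [dist_eq_norm]
  calc ‖S m x - S n x‖
      ≤ ‖S m (x - y i)‖ + ‖S m (y i) - S n (y i)‖ + ‖S n (y i - x)‖ := by
        rw [e1]
        exact le_trans (norm_add_le _ _) (add_le_add_left (norm_add_le _ _) _)
    _ < ε := by nlinarith [h2, h3, h4, h5]

theorem exists_limit_op [CompleteSpace X] {Tk : ℕ → X →L[ℝ] X} {N : ℝ} (hN : ∀ k, ‖Tk k‖ ≤ N)
    {y : ℕ → X} (hy : DenseRange y)
    (hc : ∀ i, ∃ l, Tendsto (fun k => Tk k (y i)) atTop (𝓝 l)) :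
    ∃ T : X →L[ℝ] X, ‖T‖ ≤ N ∧ ∀ x, Tendsto (fun k => Tk k x) atTop (𝓝 (T x)) := by
  have hN0 : 0 ≤ N := le_trans (norm_nonneg _) (hN 0)
  have hcauchy : ∀ x, CauchySeq fun k => Tk k x :=
    cauchySeq_of_dense hN hy (fun i => ((hc i).choose_spec).cauchySeq)
  have hconv : ∀ x, ∃ l, Tendsto (fun k => Tk k x) atTop (𝓝 l) :=
    fun x => cauchySeq_tendsto_of_complete (hcauchy x)
  choose g hg using hconv
  have hadd : ∀ x z : X, g (x + z) = g x + g z := by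
    intro x z
    refine tendsto_nhds_unique ?_ ((hg x).add (hg z))
    have e : (fun k => Tk k x + Tk k z) = fun k => Tk k (x + z) := by
      funext k; rw [map_add]
    rw [e]; exact hg _
  have hsmul : ∀ (c : ℝ) (x : X), g (c • x) = c • g x := by
    intro c x
    refine tendsto_nhds_unique ?_ ((hg x).const_smul c)
    have e : (fun k => c • Tk k x) = fun k => Tk k (c • x) := by
      funext k; rw [map_smul]
    rw [e]; exact hg _
  have hbound : ∀ x, ‖g x‖ ≤ N * ‖x‖ := by
    intro x
    refine le_of_tendsto (hg x).norm (Filter.Eventually.of_forall fun k => ?_)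
    exact le_trans ((Tk k).le_opNorm x) (mul_le_mul_of_nonneg_right (hN k) (norm_nonneg x))
  refine ⟨LinearMap.mkContinuous ⟨⟨g, fun x z => hadd x z⟩, fun c x => hsmul c x⟩ N hbound, ?_, ?_⟩
  · exact LinearMap.mkContinuous_norm_le _ hN0 _
  · exact hg

theorem opNorm_le_of_ball_dense {A : X →L[ℝ] X} {M : ℝ} (hM0 : 0 ≤ M) {xb : ℕ → X}
    (hxb1 : ∀ d, ‖xb d‖ ≤ 1)
    (hxbd : ∀ x : X, ‖x‖ ≤ 1 → ∀ ε : ℝ, 0 < ε → ∃ d, ‖x - xb d‖ < ε)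
    (h : ∀ d, ‖A (xb d)‖ ≤ M) : ‖A‖ ≤ M := by
  refine A.opNorm_le_bound hM0 fun x => ?_
  rcases eq_or_ne x 0 with rfl | hx
  · simp
  · have hxn : 0 < ‖x‖ := norm_pos_iff.2 hx
    set u := ‖x‖⁻¹ • x with hu
    have hu1 : ‖u‖ ≤ 1 := by
      rw [hu, norm_smul, norm_inv, norm_norm, inv_mul_cancel₀ (ne_of_gt hxn)]
    have hAu : ‖A u‖ ≤ M := by
      refine le_of_forall_pos_le_add fun ε hε => ?_
      obtain ⟨d, hd⟩ := hxbd u hu1 (ε / (‖A‖ + 1)) (by positivity)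
      have e : A u = A (u - xb d) + A (xb d) := by rw [map_sub]; abel
      have h1 : ‖A‖ * ‖u - xb d‖ ≤ ε := by
        have hle : ‖A‖ * ‖u - xb d‖ ≤ ‖A‖ * (ε / (‖A‖ + 1)) :=
          mul_le_mul_of_nonneg_left hd.le (norm_nonneg A)
        refine le_trans hle ?_
        rw [← mul_div_assoc, div_le_iff₀ (by positivity)]
        nlinarith [norm_nonneg A, hε.le]
      calc ‖A u‖ ≤ ‖A (u - xb d)‖ + ‖A (xb d)‖ := by rw [e]; exact norm_add_le _ _
        _ ≤ ‖A‖ * ‖u - xb d‖ + M := add_le_add (A.le_opNorm _) (h d)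
        _ ≤ M + ε := by linarith
    have e2 : A x = ‖x‖ • A u := by
      rw [hu, map_smul, smul_smul, mul_inv_cancel₀ (ne_of_gt hxn), one_smul]
    rw [e2, norm_smul, norm_norm, mul_comm M ‖x‖]
    exact mul_le_mul_of_nonneg_left hAu (norm_nonneg x)

theorem cauchySeq_of_modulus {v : ℕ → X} {φ : ℕ → ℕ}
    (h : ∀ j n m, φ j ≤ n → φ j ≤ m → ‖v n - v m‖ ≤ ((j : ℝ) + 1)⁻¹) : CauchySeq v := by
  rw [Metric.cauchySeq_iff]
  intro ε hε
  obtain ⟨j, hj⟩ := exists_nat_one_div_lt hε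
  refine ⟨φ j, fun m hm n hn => ?_⟩
  rw [dist_eq_norm]
  calc ‖v m - v n‖ ≤ ((j : ℝ) + 1)⁻¹ := h j m n hm hn
    _ = 1 / ((j : ℝ) + 1) := (one_div _).symm
    _ < ε := hj

theorem ergodic_bounds [CompleteSpace X] {T : X →L[ℝ] X} (h : IsErgodicOp T) :
    ∃ M : ℕ, ∀ n, ‖cesaroMean T n‖ ≤ (M : ℝ) := by
  have hpt : ∀ x, ∃ C, ∀ n : ℕ, ‖cesaroMean T n x‖ ≤ C := by
    intro x
    obtain ⟨y, hy⟩ := h x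
    obtain ⟨C, hC⟩ := hy.norm.bddAbove_range
    exact ⟨C, fun n => hC ⟨n, rfl⟩⟩
  obtain ⟨C', hC'⟩ := banach_steinhaus hpt
  exact ⟨⌈C'⌉₊, fun n => le_trans (hC' n) (Nat.le_ceil _)⟩

theorem ergodic_of_data [CompleteSpace X] {T : X →L[ℝ] X} {M : ℝ}
    (hM : ∀ n, ‖cesaroMean T n‖ ≤ M) {y : ℕ → X} (hy : DenseRange y)
    (hC : ∀ i, CauchySeq fun n => cesaroMean T n (y i)) : IsErgodicOp T :=
  fun x => cauchySeq_tendsto_of_complete (cauchySeq_of_dense hM hy hC x)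

end Analysis
section Master

variable {P : Type*} [MetricSpace P]

/-- The master well-founded relation on `List ℕ × ℕ × ℚ` used to bound the rank of all
trees `Tr p` for `p ∈ C` simultaneously. -/
def masterRel (D : ℕ → P) (Tr : P → Set (List ℕ)) (C : Set P) :
    (List ℕ × ℕ × ℚ) → (List ℕ × ℕ × ℚ) → Prop := fun b a =>
  a.1 <+: b.1 ∧ a.1 ≠ b.1 ∧ 0 < b.2.2 ∧ (b.2.2 : ℝ) ≤ (a.2.2 : ℝ) / 2 ∧
  dist (D b.2.1) (D a.2.1) + (b.2.2 : ℝ) ≤ (a.2.2 : ℝ) ∧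
  (∀ p : P, dist p (D a.2.1) ≤ (a.2.2 : ℝ) → a.1 ∈ Tr p) ∧
  (∀ p : P, dist p (D b.2.1) ≤ (b.2.2 : ℝ) → b.1 ∈ Tr p) ∧
  (∃ c ∈ C, dist c (D b.2.1) ≤ (b.2.2 : ℝ))

theorem masterRel_wf [CompleteSpace P] {D : ℕ → P} {Tr : P → Set (List ℕ)} {C : Set P}
    (hCcl : ∀ (u : ℕ → P) (p : P), (∀ n, u n ∈ C) → Tendsto u atTop (𝓝 p) → p ∈ C)
    (hBr : ∀ p ∈ C, ∀ s : ℕ → List ℕ, (∀ n, s n ∈ Tr p) → (∀ n, s n <+: s (n + 1)) →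
      (∀ n, s n ≠ s (n + 1)) → False) :
    WellFounded (masterRel D Tr C) := by
  by_contra hwf
  obtain ⟨f, hf⟩ := exists_descending_of_not_wf hwf
  set s : ℕ → List ℕ := fun n => (f n).1 with hs
  set e : ℕ → ℕ := fun n => (f n).2.1 with he
  set ρ : ℕ → ℝ := fun n => ((f n).2.2 : ℝ) with hρ
  have hpre : ∀ n, s n <+: s (n + 1) := fun n => (hf n).1
  have hne : ∀ n, s n ≠ s (n + 1) := fun n => (hf n).2.1
  have hpos : ∀ n, (0 : ℝ) < ρ (n + 1) := by
    intro n
    show (0 : ℝ) < ((f (n + 1)).2.2 : ℝ)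
    exact_mod_cast (hf n).2.2.1
  have hhalf : ∀ n, ρ (n + 1) ≤ ρ n / 2 := fun n => (hf n).2.2.2.1
  have hnest : ∀ n, dist (D (e (n + 1))) (D (e n)) + ρ (n + 1) ≤ ρ n :=
    fun n => (hf n).2.2.2.2.1
  have hcapt : ∀ n, ∀ p : P, dist p (D (e n)) ≤ ρ n → s n ∈ Tr p :=
    fun n => (hf n).2.2.2.2.2.1
  have hex : ∀ n, ∃ c ∈ C, dist c (D (e (n + 1))) ≤ ρ (n + 1) :=
    fun n => (hf n).2.2.2.2.2.2.2
  choose c hcC hcd using hex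
  -- centers chain bound
  have hchain : ∀ l k, dist (D (e (l + k))) (D (e l)) ≤ ρ l - ρ (l + k) := by
    intro l k
    induction k with
    | zero => simp
    | succ k ih =>
        have h1 := hnest (l + k)
        calc dist (D (e (l + (k + 1)))) (D (e l))
            ≤ dist (D (e (l + k + 1))) (D (e (l + k))) + dist (D (e (l + k))) (D (e l)) := by
              rw [show l + (k + 1) = l + k + 1 by ring]
              exact dist_triangle _ _ _
          _ ≤ ρ l - ρ (l + (k + 1)) := by
              rw [show l + (k + 1) = l + k + 1 by ring]
              linarith [ih]
  -- geometric decay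
  have hgeo : ∀ k, ρ (k + 1) ≤ ρ 1 / 2 ^ k := by
    intro k
    induction k with
    | zero => simp
    | succ k ih =>
        have h1 := hhalf (k + 1)
        calc ρ (k + 1 + 1) ≤ ρ (k + 1) / 2 := h1
          _ ≤ ρ 1 / 2 ^ k / 2 := by linarith
          _ = ρ 1 / 2 ^ (k + 1) := by rw [pow_succ]; ring
  have hρ0 : Tendsto (fun k => ρ (k + 1)) atTop (𝓝 0) := by
    have hup : Tendsto (fun k : ℕ => ρ 1 / 2 ^ k) atTop (𝓝 0) := by
      have h0 := tendsto_pow_atTop_nhds_zero_of_lt_one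
        (by norm_num : (0:ℝ) ≤ 1/2) (by norm_num : (1:ℝ)/2 < 1)
      have h2 := h0.const_mul (ρ 1)
      simpa [div_eq_mul_inv, div_pow, one_div, inv_pow] using h2
    exact squeeze_zero (fun k => (hpos k).le) hgeo hup
  -- c is Cauchy
  have hcc : ∀ n k, dist (c (n + k)) (c n) ≤ 2 * ρ (n + 1) := by
    intro n k
    have h1 : dist (c (n + k)) (D (e (n + k + 1))) ≤ ρ (n + k + 1) := hcd (n + k)
    have h2 : dist (D (e (n + k + 1))) (D (e (n + 1))) ≤ ρ (n + 1) - ρ (n + k + 1) := by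
      have h3 := hchain (n + 1) k
      rw [show n + 1 + k = n + k + 1 by ring] at h3
      exact h3
    have h3 : dist (D (e (n + 1))) (c n) ≤ ρ (n + 1) := by
      rw [dist_comm]; exact hcd n
    calc dist (c (n + k)) (c n)
        ≤ dist (c (n + k)) (D (e (n + k + 1))) + dist (D (e (n + k + 1))) (D (e (n + 1)))
            + dist (D (e (n + 1))) (c n) := dist_triangle4 _ _ _ _
      _ ≤ 2 * ρ (n + 1) := by linarith
  have hcauchy : CauchySeq c := by
    rw [Metric.cauchySeq_iff']
    intro ε hε
    obtain ⟨K, hK⟩ := (Metric.tendsto_atTop.1 hρ0) (ε / 2) (by positivity)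
    refine ⟨K, fun n hn => ?_⟩
    obtain ⟨k, rfl⟩ := Nat.exists_eq_add_of_le hn
    have h6 := hcc K k
    have h5 := hK K le_rfl
    rw [Real.dist_eq, sub_zero, abs_of_pos (hpos K)] at h5
    calc dist (c (K + k)) (c K) ≤ 2 * ρ (K + 1) := h6
      _ < ε := by linarith
  obtain ⟨pstar, hp⟩ := cauchySeq_tendsto_of_complete hcauchy
  have hpC : pstar ∈ C := hCcl c pstar hcC hp
  -- pstar is within every ball
  have hpball : ∀ n, dist pstar (D (e (n + 1))) ≤ ρ (n + 1) := by
    intro n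
    have hconv : Tendsto (fun k => dist (c (n + k)) (D (e (n + 1)))) atTop
        (𝓝 (dist pstar (D (e (n + 1))))) := by
      have h1 : Tendsto (fun k => c (n + k)) atTop (𝓝 pstar) :=
        hp.comp (tendsto_atTop_atTop_of_monotone (fun a b hab => by omega) (fun b => ⟨b, by omega⟩))
      exact (Continuous.dist continuous_id continuous_const).continuousAt.tendsto.comp h1
    refine le_of_tendsto hconv (Filter.Eventually.of_forall fun k => ?_)
    have h1 : dist (c (n + k)) (D (e (n + k + 1))) ≤ ρ (n + k + 1) := hcd (n + k)
    have h2 : dist (D (e (n + k + 1))) (D (e (n + 1))) ≤ ρ (n + 1) - ρ (n + k + 1) := by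
      have := hchain (n + 1) k
      rw [show n + 1 + k = n + k + 1 by ring] at this
      exact this
    calc dist (c (n + k)) (D (e (n + 1)))
        ≤ dist (c (n + k)) (D (e (n + k + 1))) + dist (D (e (n + k + 1))) (D (e (n + 1))) :=
          dist_triangle _ _ _
      _ ≤ ρ (n + 1) := by linarith
  have hmem : ∀ n, s (n + 1) ∈ Tr pstar := fun n => hcapt (n + 1) pstar (hpball n)
  exact hBr pstar hpC (fun n => s (n + 1)) hmem (fun n => hpre (n + 1)) (fun n => hne (n + 1))

end Master
section Embed

variable {P : Type*} [MetricSpace P]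

theorem exists_hom_to_master {D : ℕ → P} {Tr : P → Set (List ℕ)} {C : Set P}
    (hD : DenseRange D) {p : P} (hp : p ∈ C)
    (hOpen : ∀ s, s ∈ Tr p → ∃ δ : ℝ, 0 < δ ∧ ∀ p' : P, dist p' p ≤ δ → s ∈ Tr p') :
    ∃ f : List ℕ → (List ℕ × ℕ × ℚ),
      ∀ ⦃a b : List ℕ⦄, treeRel (Tr p) b a → masterRel D Tr C (f b) (f a) := by
  have hex : ∀ s : List ℕ, ∃ k : ℕ,
      s ∈ Tr p → ∀ p' : P, dist p' p ≤ (1/2 : ℝ) ^ k → s ∈ Tr p' := by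
    intro s
    by_cases hs : s ∈ Tr p
    · obtain ⟨δ, hδ, hcap⟩ := hOpen s hs
      obtain ⟨k, hk⟩ := exists_pow_lt_of_lt_one hδ (by norm_num : (1:ℝ)/2 < 1)
      exact ⟨k, fun _ p' hp' => hcap p' (le_trans hp' hk.le)⟩
    · exact ⟨0, fun hs' => absurd hs' hs⟩
  choose kk hkk using hex
  set K : List ℕ → ℕ := fun t => (Finset.range (t.length + 1)).sup fun i => kk (t.take i)
    with hK
  have hkK : ∀ t, kk t ≤ K t := by
    intro t
    have h1 : kk (t.take t.length) ≤ (Finset.range (t.length + 1)).sup fun i => kk (t.take i) :=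
      Finset.le_sup (f := fun i => kk (t.take i)) (Finset.self_mem_range_succ t.length)
    rw [List.take_length] at h1
    exact h1
  have hKmono : ∀ {t t' : List ℕ}, t <+: t' → K t ≤ K t' := by
    rintro t t' ⟨u, rfl⟩
    refine Finset.sup_le fun i hi => ?_
    rw [Finset.mem_range] at hi
    have hi' : i ≤ t.length := by omega
    have e1 : (t ++ u).take i = t.take i := by
      rw [List.take_append, Nat.sub_eq_zero_of_le hi', List.take_zero,
        List.append_nil]
    have h2 : kk ((t ++ u).take i) ≤
        (Finset.range ((t ++ u).length + 1)).sup fun j => kk ((t ++ u).take j) := by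
      refine Finset.le_sup (f := fun j => kk ((t ++ u).take j)) ?_
      rw [Finset.mem_range, List.length_append]
      omega
    rwa [e1] at h2
  set ρ : List ℕ → ℚ := fun t => (1/2 : ℚ) ^ (K t + t.length + 2) with hρ
  have hρpos : ∀ t, 0 < ρ t := fun t => by positivity
  have hρcast : ∀ t, ((ρ t : ℚ) : ℝ) = (1/2 : ℝ) ^ (K t + t.length + 2) := by
    intro t
    simp only [hρ]
    push_cast
    norm_num
  have hρle : ∀ t, ((ρ t : ℚ) : ℝ) ≤ (1/2 : ℝ) ^ (kk t + 2) := by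
    intro t
    rw [hρcast]
    exact pow_le_pow_of_le_one (by norm_num) (by norm_num) (by have := hkK t; omega)
  have hed : ∀ t : List ℕ, ∃ i : ℕ, dist p (D i) < ((ρ t : ℚ) : ℝ) / 4 := by
    intro t
    exact hD.exists_dist_lt p (by have := hρpos t; positivity)
  choose e he using hed
  refine ⟨fun t => (t, e t, ρ t), ?_⟩
  rintro a b ⟨ha, hb, hab, hne⟩
  have hlen : a.length < b.length := by
    rcases lt_or_eq_of_le hab.length_le with h | h
    · exact h
    · exact absurd (hab.eq_of_length h) hne
  have hKab : K a ≤ K b := hKmono hab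
  have h4 : ((ρ b : ℚ) : ℝ) ≤ ((ρ a : ℚ) : ℝ) / 2 := by
    rw [hρcast, hρcast]
    have e1 : (1/2 : ℝ) ^ (K a + a.length + 2 + 1) = (1/2 : ℝ) ^ (K a + a.length + 2) / 2 := by
      rw [pow_succ]; ring
    calc (1/2 : ℝ) ^ (K b + b.length + 2) ≤ (1/2 : ℝ) ^ (K a + a.length + 2 + 1) :=
          pow_le_pow_of_le_one (by norm_num) (by norm_num) (by omega)
      _ = _ := e1
  have hea : dist p (D (e a)) < ((ρ a : ℚ) : ℝ) / 4 := he a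
  have heb : dist p (D (e b)) < ((ρ b : ℚ) : ℝ) / 4 := he b
  have hρb0 : (0:ℝ) < ((ρ b : ℚ) : ℝ) := by exact_mod_cast hρpos b
  have hρa0 : (0:ℝ) < ((ρ a : ℚ) : ℝ) := by exact_mod_cast hρpos a
  have hcapture : ∀ (t : List ℕ), t ∈ Tr p → ∀ p' : P,
      dist p' (D (e t)) ≤ ((ρ t : ℚ) : ℝ) → t ∈ Tr p' := by
    intro t ht p' hp'
    refine hkk t ht p' ?_
    have h1 : dist p' p ≤ dist p' (D (e t)) + dist (D (e t)) p := dist_triangle _ _ _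
    have h2 : dist (D (e t)) p < ((ρ t : ℚ) : ℝ) / 4 := by rw [dist_comm]; exact he t
    have h3 := hρle t
    have h5 : (1/2 : ℝ) ^ (kk t + 2) = (1/2 : ℝ) ^ (kk t) / 4 := by
      rw [pow_add]; norm_num; ring
    have h6 : (0:ℝ) < (1/2 : ℝ) ^ (kk t) := by positivity
    rw [h5] at h3
    linarith
  refine ⟨hab, hne, hρpos b, h4, ?_, ?_, ?_, ?_⟩
  · -- nesting
    have h1 : dist (D (e b)) (D (e a)) ≤ dist (D (e b)) p + dist p (D (e a)) :=
      dist_triangle _ _ _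
    have h2 : dist (D (e b)) p < ((ρ b : ℚ) : ℝ) / 4 := by rw [dist_comm]; exact he b
    show dist (D (e b)) (D (e a)) + ((ρ b : ℚ) : ℝ) ≤ ((ρ a : ℚ) : ℝ)
    linarith
  · exact fun p' hp' => hcapture a ha p' hp'
  · exact fun p' hp' => hcapture b hb p' hp'
  · refine ⟨p, hp, ?_⟩
    show dist p (D (e b)) ≤ ((ρ b : ℚ) : ℝ)
    linarith [he b]

end Embed
section Concrete

set_option linter.unusedSectionVars false
set_option maxHeartbeats 1000000

variable {X : Type*} [NormedAddCommGroup X] [NormedSpace ℝ X]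

/-- Cesàro means of orbit data. -/
noncomputable def ces (w : ℕ → ℕ → X) (n d : ℕ) : X :=
  (n : ℝ)⁻¹ • ∑ k ∈ Finset.range n, w k d

/-- The coordinate version of the ergodic tree. -/
def dTr (q : ℝ) (w : ℕ → ℕ → X) : Set (List ℕ) :=
  {s | s.Chain' (· < ·) ∧ (s.length ≤ 1 ∨ ∃ d : ℕ, ∀ i : ℕ, i + 1 < s.length →
    q < ‖ces w (s.getD i 0) d - ces w (s.getD (i + 1) 0) d‖)}

/-- The set of parameters coding ergodic operators with controlled data. -/
def CCset (xb : ℕ → X) (N M : ℕ) : Set ((ℕ → ℕ → X) × (ℕ → ℕ → ℕ)) :=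
  {p | ∃ T : X →L[ℝ] X, ‖T‖ ≤ (N : ℝ) ∧ (∀ d, p.1 0 d = xb d) ∧
    (∀ n d, p.1 (n + 1) d = T (p.1 n d)) ∧
    (∀ n d, ‖ces p.1 n d‖ ≤ (M : ℝ)) ∧
    (∀ d j n m, p.2 d j ≤ n → p.2 d j ≤ m →
      ‖ces p.1 n d - ces p.1 m d‖ ≤ ((j : ℝ) + 1)⁻¹)}

theorem ces_eq_cesaro {T : X →L[ℝ] X} {xb : ℕ → X} {w : ℕ → ℕ → X}
    (h0 : ∀ d, w 0 d = xb d) (hsucc : ∀ n d, w (n + 1) d = T (w n d)) :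
    ∀ n d, ces w n d = cesaroMean T n (xb d) := by
  have hiter : ∀ n d, w n d = (T ^ n) (xb d) := by
    intro n
    induction n with
    | zero => intro d; rw [h0 d, pow_zero, ContinuousLinearMap.one_apply]
    | succ k ih =>
        intro d
        rw [hsucc k d, ih d, pow_succ', ContinuousLinearMap.mul_apply]
  intro n d
  rw [ces, cesaroMean_apply]
  congr 1
  exact Finset.sum_congr rfl fun k _ => hiter k d

theorem denseRange_scaled {xb : ℕ → X}
    (hxbd : ∀ x : X, ‖x‖ ≤ 1 → ∀ ε : ℝ, 0 < ε → ∃ d, ‖x - xb d‖ < ε) :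
    DenseRange (fun i : ℕ => (((Nat.unpair i).1 : ℝ)) • xb (Nat.unpair i).2) := by
  rw [Metric.denseRange_iff]
  intro x r hr
  set n : ℕ := ⌊‖x‖⌋₊ + 1 with hn
  have hn0 : (0 : ℝ) < n := by positivity
  have hxn : ‖x‖ ≤ (n : ℝ) := by
    have := Nat.lt_floor_add_one ‖x‖
    rw [hn]
    push_cast
    linarith
  have hx' : ‖(n : ℝ)⁻¹ • x‖ ≤ 1 := by
    rw [norm_smul, norm_inv, Real.norm_natCast, inv_mul_le_iff₀ hn0, mul_one]
    exact hxn
  obtain ⟨d, hd⟩ := hxbd _ hx' (r / n) (by positivity)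
  refine ⟨Nat.pair n d, ?_⟩
  have he : (Nat.unpair (Nat.pair n d)) = (n, d) := Nat.unpair_pair n d
  rw [he]
  simp only
  have hx : x = (n : ℝ) • ((n : ℝ)⁻¹ • x) := by
    rw [smul_smul, mul_inv_cancel₀ (ne_of_gt hn0), one_smul]
  calc dist x ((n : ℝ) • xb d) = ‖(n : ℝ) • ((n : ℝ)⁻¹ • x) - (n : ℝ) • xb d‖ := by
        rw [dist_eq_norm, ← hx]
    _ = (n : ℝ) * ‖(n : ℝ)⁻¹ • x - xb d‖ := by
        rw [← smul_sub, norm_smul, Real.norm_natCast]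
    _ < (n : ℝ) * (r / n) := by
        exact mul_lt_mul_of_pos_left hd hn0
    _ = r := by field_simp
  done

theorem dTr_eq_ergoTree {T : X →L[ℝ] X} {xb : ℕ → X} {w : ℕ → ℕ → X}
    (hxb1 : ∀ d, ‖xb d‖ ≤ 1)
    (hxbd : ∀ x : X, ‖x‖ ≤ 1 → ∀ ε : ℝ, 0 < ε → ∃ d, ‖x - xb d‖ < ε)
    (hv : ∀ n d, ces w n d = cesaroMean T n (xb d)) (q : ℝ) :
    dTr q w = ergoTree T q := by
  ext s
  constructor
  · rintro ⟨hchain, hrest⟩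
    refine ⟨hchain, ?_⟩
    rcases hrest with hlen | ⟨d, hd⟩
    · exact Or.inl hlen
    · refine Or.inr ⟨xb d, hxb1 d, fun i hi => ?_⟩
      have := hd i hi
      rwa [hv, hv] at this
  · rintro ⟨hchain, hrest⟩
    refine ⟨hchain, ?_⟩
    rcases hrest with hlen | ⟨x, hx, hvals⟩
    · exact Or.inl hlen
    · by_cases hlen : s.length ≤ 1
      · exact Or.inl hlen
      · refine Or.inr ?_
        have hg : ∀ k : ℕ, ∃ d, ‖x - xb d‖ < ((k : ℝ) + 1)⁻¹ := by
          intro k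
          exact hxbd x hx _ (by positivity)
        choose g hgd using hg
        have hgx : Tendsto (fun k => xb (g k)) atTop (𝓝 x) := by
          rw [tendsto_iff_norm_sub_tendsto_zero]
          have hub : Tendsto (fun k : ℕ => ((k : ℝ) + 1)⁻¹) atTop (𝓝 0) :=
            tendsto_one_div_add_atTop_nhds_zero_nat.congr fun k => by rw [one_div]
          refine squeeze_zero (fun k => norm_nonneg _) (fun k => ?_) hub
          rw [norm_sub_rev]
          exact (hgd k).le
        have hev : ∀ᶠ k in atTop, ∀ i ∈ Finset.range (s.length - 1),
            q < ‖cesaroMean T (s.getD i 0) (xb (g k)) -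
              cesaroMean T (s.getD (i + 1) 0) (xb (g k))‖ := by
          rw [Filter.eventually_all_finset]
          intro i hi
          rw [Finset.mem_range] at hi
          have hi' : i + 1 < s.length := by omega
          have hcont : Tendsto (fun k => ‖cesaroMean T (s.getD i 0) (xb (g k)) -
              cesaroMean T (s.getD (i + 1) 0) (xb (g k))‖) atTop
              (𝓝 ‖cesaroMean T (s.getD i 0) x - cesaroMean T (s.getD (i + 1) 0) x‖) := by
            have hc : Continuous fun z : X => ‖cesaroMean T (s.getD i 0) z -
                cesaroMean T (s.getD (i + 1) 0) z‖ :=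
              ((cesaroMean T _).continuous.sub (cesaroMean T _).continuous).norm
            exact (hc.continuousAt).tendsto.comp hgx
          exact hcont.eventually_const_lt (hvals i hi')
        obtain ⟨k, hk⟩ := hev.exists
        refine ⟨g k, fun i hi => ?_⟩
        rw [hv, hv]
        exact hk i (by rw [Finset.mem_range]; omega)

theorem CC_closed_pure [CompleteSpace X] {xb : ℕ → X} {N M : ℕ}
    (hxbd : ∀ x : X, ‖x‖ ≤ 1 → ∀ ε : ℝ, 0 < ε → ∃ d, ‖x - xb d‖ < ε)
    {u : ℕ → (ℕ → ℕ → X) × (ℕ → ℕ → ℕ)} {p : (ℕ → ℕ → X) × (ℕ → ℕ → ℕ)}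
    (hu : ∀ k, u k ∈ CCset xb N M)
    (hw : ∀ n d, Tendsto (fun k => (u k).1 n d) atTop (𝓝 (p.1 n d)))
    (hφ : ∀ d j, ∀ᶠ k in atTop, (u k).2 d j = p.2 d j) :
    p ∈ CCset xb N M := by
  choose Tk hTkN hTk0 hTksucc hTkces hTkmod using hu
  -- convergence of Cesàro data
  have hcesconv : ∀ n d, Tendsto (fun k => ces (u k).1 n d) atTop (𝓝 (ces p.1 n d)) := by
    intro n d
    unfold ces
    refine Tendsto.const_smul ?_ _
    exact tendsto_finset_sum _ fun i _ => hw i d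
  -- limit operator
  set y : ℕ → X := fun i => (((Nat.unpair i).1 : ℝ)) • xb (Nat.unpair i).2 with hy
  have hyd : DenseRange y := denseRange_scaled hxbd
  have hTkxb : ∀ k d, Tk k (xb d) = (u k).1 1 d := by
    intro k d
    rw [← hTk0 k d]
    exact (hTksucc k 0 d).symm
  have hyconv : ∀ i, ∃ l, Tendsto (fun k => Tk k (y i)) atTop (𝓝 l) := by
    intro i
    refine ⟨(((Nat.unpair i).1 : ℝ)) • p.1 1 (Nat.unpair i).2, ?_⟩
    have he : ∀ k, Tk k (y i) = (((Nat.unpair i).1 : ℝ)) • (u k).1 1 (Nat.unpair i).2 := by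
      intro k
      rw [hy]
      simp only [map_smul]
      rw [hTkxb k _]
    refine Tendsto.congr (fun k => (he k).symm) ?_
    exact (hw 1 _).const_smul _
  obtain ⟨T, hTN, hTconv⟩ := exists_limit_op hTkN hyd hyconv
  refine ⟨T, hTN, ?_, ?_, ?_, ?_⟩
  · intro d
    exact tendsto_nhds_unique ((hw 0 d).congr fun k => (hTk0 k d)) tendsto_const_nhds
  · intro n d
    have hN0 : (0 : ℝ) ≤ N := Nat.cast_nonneg N
    refine tendsto_nhds_unique ((hw (n + 1) d).congr fun k => hTksucc k n d) ?_
    rw [tendsto_iff_norm_sub_tendsto_zero]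
    have hbnd : ∀ k, ‖Tk k ((u k).1 n d) - T (p.1 n d)‖ ≤
        (N : ℝ) * ‖(u k).1 n d - p.1 n d‖ + ‖Tk k (p.1 n d) - T (p.1 n d)‖ := by
      intro k
      have e1 : Tk k ((u k).1 n d) - T (p.1 n d) =
          Tk k ((u k).1 n d - p.1 n d) + (Tk k (p.1 n d) - T (p.1 n d)) := by
        rw [map_sub]; abel
      rw [e1]
      refine le_trans (norm_add_le _ _) ?_
      gcongr
      exact le_trans ((Tk k).le_opNorm _) (mul_le_mul_of_nonneg_right (hTkN k) (norm_nonneg _))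
    refine squeeze_zero (fun k => norm_nonneg _) hbnd ?_
    have h1 : Tendsto (fun k => ‖(u k).1 n d - p.1 n d‖) atTop (𝓝 0) := by
      rw [← tendsto_iff_norm_sub_tendsto_zero]
      exact hw n d
    have h2 : Tendsto (fun k => ‖Tk k (p.1 n d) - T (p.1 n d)‖) atTop (𝓝 0) := by
      rw [← tendsto_iff_norm_sub_tendsto_zero]
      exact hTconv _
    have := (h1.const_mul (N : ℝ)).add h2
    simpa using this
  · intro n d
    exact le_of_tendsto (hcesconv n d).norm
      (Filter.Eventually.of_forall fun k => hTkces k n d)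
  · intro d j n m hn hm
    have hcd : Tendsto (fun k => ‖ces (u k).1 n d - ces (u k).1 m d‖) atTop
        (𝓝 ‖ces p.1 n d - ces p.1 m d‖) :=
      ((hcesconv n d).sub (hcesconv m d)).norm
    refine le_of_tendsto hcd ?_
    filter_upwards [hφ d j] with k hk
    exact hTkmod k d j n m (by rw [hk]; exact hn) (by rw [hk]; exact hm)

theorem CC_spec [CompleteSpace X] {xb : ℕ → X} {N M : ℕ}
    (hxb1 : ∀ d, ‖xb d‖ ≤ 1)
    (hxbd : ∀ x : X, ‖x‖ ≤ 1 → ∀ ε : ℝ, 0 < ε → ∃ d, ‖x - xb d‖ < ε)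
    {p : (ℕ → ℕ → X) × (ℕ → ℕ → ℕ)} (hp : p ∈ CCset xb N M) :
    ∃ T : X →L[ℝ] X, IsErgodicOp T ∧ ∀ q : ℝ, dTr q p.1 = ergoTree T q := by
  obtain ⟨T, hTN, hT0, hTsucc, hTces, hTmod⟩ := hp
  have hv : ∀ n d, ces p.1 n d = cesaroMean T n (xb d) := ces_eq_cesaro hT0 hTsucc
  have hM : ∀ n, ‖cesaroMean T n‖ ≤ (M : ℝ) := by
    intro n
    refine opNorm_le_of_ball_dense (Nat.cast_nonneg M) hxb1 hxbd fun d => ?_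
    rw [← hv]
    exact hTces n d
  have hCbase : ∀ d, CauchySeq fun n => cesaroMean T n (xb d) := by
    intro d
    have e : (fun n => cesaroMean T n (xb d)) = fun n => ces p.1 n d :=
      funext fun n => (hv n d).symm
    rw [e]
    exact cauchySeq_of_modulus fun j n m hn hm => hTmod d j n m hn hm
  have hyC : ∀ i : ℕ, CauchySeq fun n =>
      cesaroMean T n ((((Nat.unpair i).1 : ℝ)) • xb (Nat.unpair i).2) := by
    intro i
    have e : (fun n => cesaroMean T n ((((Nat.unpair i).1 : ℝ)) • xb (Nat.unpair i).2)) =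
        fun n => (((Nat.unpair i).1 : ℝ)) • cesaroMean T n (xb (Nat.unpair i).2) := by
      funext n
      exact map_smul _ _ _
    rw [e]
    obtain ⟨l, hl⟩ := cauchySeq_tendsto_of_complete (hCbase (Nat.unpair i).2)
    exact (hl.const_smul _).cauchySeq
  have hE : IsErgodicOp T := ergodic_of_data hM (denseRange_scaled hxbd) hyC
  exact ⟨T, hE, fun q => dTr_eq_ergoTree hxb1 hxbd hv q⟩

theorem CC_contains [CompleteSpace X] {xb : ℕ → X}
    (hxb1 : ∀ d, ‖xb d‖ ≤ 1)
    (hxbd : ∀ x : X, ‖x‖ ≤ 1 → ∀ ε : ℝ, 0 < ε → ∃ d, ‖x - xb d‖ < ε)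
    (T : X →L[ℝ] X) (hT : IsErgodicOp T) :
    ∃ N M : ℕ, ∃ p : (ℕ → ℕ → X) × (ℕ → ℕ → ℕ), p ∈ CCset xb N M ∧
      ∀ q : ℝ, dTr q p.1 = ergoTree T q := by
  obtain ⟨M, hM⟩ := ergodic_bounds hT
  set w : ℕ → ℕ → X := fun n d => (T ^ n) (xb d) with hw
  have h0 : ∀ d, w 0 d = xb d := by
    intro d; rw [hw]; simp only [pow_zero, ContinuousLinearMap.one_apply]
  have hsucc : ∀ n d, w (n + 1) d = T (w n d) := by
    intro n d
    rw [hw]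
    simp only
    rw [pow_succ', ContinuousLinearMap.mul_apply]
  have hv : ∀ n d, ces w n d = cesaroMean T n (xb d) := ces_eq_cesaro h0 hsucc
  have hmod : ∀ d j : ℕ, ∃ K : ℕ, ∀ n m, K ≤ n → K ≤ m →
      ‖ces w n d - ces w m d‖ ≤ ((j : ℝ) + 1)⁻¹ := by
    intro d j
    obtain ⟨l, hl⟩ := hT (xb d)
    have hc : CauchySeq fun n => cesaroMean T n (xb d) := hl.cauchySeq
    obtain ⟨K, hK⟩ := Metric.cauchySeq_iff.1 hc (((j : ℝ) + 1)⁻¹) (by positivity)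
    refine ⟨K, fun n m hn hm => ?_⟩
    rw [hv, hv]
    have := hK n hn m hm
    rw [dist_eq_norm] at this
    exact this.le
  choose φ hφ using hmod
  refine ⟨⌈‖T‖⌉₊, M, (w, φ), ⟨T, ?_, h0, hsucc, ?_, ?_⟩, fun q => dTr_eq_ergoTree hxb1 hxbd hv q⟩
  · exact Nat.le_ceil _
  · intro n d
    rw [hv]
    calc ‖cesaroMean T n (xb d)‖ ≤ ‖cesaroMean T n‖ * ‖xb d‖ := (cesaroMean T n).le_opNorm _
      _ ≤ (M : ℝ) * 1 := mul_le_mul (hM n) (hxb1 d) (norm_nonneg _) (Nat.cast_nonneg M)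
      _ = (M : ℝ) := mul_one _
  · intro d j n m hn hm
    exact hφ d j n m hn hm

/-- Openness of membership in the coordinate tree, for an abstract metric parameter space. -/
theorem dTr_open {P' : Type*} [MetricSpace P'] (W : P' → ℕ → ℕ → X)
    (hW : ∀ n d, Continuous fun p : P' => W p n d) (q : ℝ) (s : List ℕ) (p : P')
    (hs : s ∈ dTr q (W p)) :
    ∃ δ : ℝ, 0 < δ ∧ ∀ p' : P', dist p' p ≤ δ → s ∈ dTr q (W p') := by
  obtain ⟨hchain, hrest⟩ := hs
  rcases hrest with hlen | ⟨d, hd⟩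
  · exact ⟨1, by norm_num, fun p' _ => ⟨hchain, Or.inl hlen⟩⟩
  · have hWces : ∀ n d, Continuous fun p : P' => ces (W p) n d := by
      intro n d
      unfold ces
      exact (continuous_finset_sum _ fun i _ => hW i d).const_smul _
    set U : Set P' := ⋂ i ∈ Finset.range (s.length - 1),
      {p' : P' | q < ‖ces (W p') (s.getD i 0) d - ces (W p') (s.getD (i + 1) 0) d‖} with hU
    have hUopen : IsOpen U := by
      refine isOpen_biInter_finset fun i _ => ?_
      have hcont : Continuous fun p' : P' =>
          ‖ces (W p') (s.getD i 0) d - ces (W p') (s.getD (i + 1) 0) d‖ :=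
        ((hWces _ d).sub (hWces _ d)).norm
      exact isOpen_lt continuous_const hcont
    have hpU : p ∈ U := by
      rw [hU]
      refine Set.mem_iInter₂.2 fun i hi => ?_
      rw [Finset.mem_range] at hi
      exact hd i (by omega)
    obtain ⟨r, hr, hball⟩ := Metric.isOpen_iff.1 hUopen p hpU
    refine ⟨r / 2, by positivity, fun p' hp' => ?_⟩
    have hp'U : p' ∈ U := hball (by rw [Metric.mem_ball]; linarith)
    refine ⟨hchain, Or.inr ⟨d, fun i hi => ?_⟩⟩
    have := Set.mem_iInter₂.1 hp'U i (by rw [Finset.mem_range]; omega)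
    exact this

end Concrete
set_option maxHeartbeats 2000000 in
/-- Dichotomy: for a separable Banach space `X`, exactly one of the following holds:
(i) there is an ergodic operator satisfying (NSE) (ergodic but not super-ergodic), or
(ii) there is a countable ordinal `α` bounding the heights of all trees `𝒜_e(T, ε)` of
ergodic operators `T` (all of which fail (NSE) and have well-founded trees). -/
theorem stmt_13 (X : Type*) [NormedAddCommGroup X] [NormedSpace ℝ X] [CompleteSpace X]
    [TopologicalSpace.SeparableSpace X] :
    Xor'
      (∃ T : X →L[ℝ] X, IsErgodicOp T ∧ NSE T)
      (∃ α : Ordinal, α < (Cardinal.aleph 1).ord ∧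
        ∀ T : X →L[ℝ] X, IsErgodicOp T →
          ¬ NSE T ∧ ∀ ε : ℝ, 0 < ε →
            TreeWF (ergoTree T ε) ∧ treeHeight (ergoTree T ε) ≤ α) := by
  by_cases h : ∃ T : X →L[ℝ] X, IsErgodicOp T ∧ NSE T
  · left
    refine ⟨h, ?_⟩
    rintro ⟨α, hα, hall⟩
    obtain ⟨T, hE, hN⟩ := h
    exact (hall T hE).1 hN
  · right
    refine ⟨?_, h⟩
    -- a dense sequence in the closed unit ball
    haveI : SecondCountableTopology X := UniformSpace.secondCountable_of_separable X
    haveI hball : Nonempty (Metric.closedBall (0:X) 1) :=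
      ⟨⟨0, Metric.mem_closedBall_self (by norm_num)⟩⟩
    set xb : ℕ → X := fun d => (TopologicalSpace.denseSeq (Metric.closedBall (0:X) 1) d : X)
      with hxb
    have hxb1 : ∀ d, ‖xb d‖ ≤ 1 := by
      intro d
      have h2 := (TopologicalSpace.denseSeq (Metric.closedBall (0:X) 1) d).2
      rwa [Metric.mem_closedBall, dist_zero_right] at h2
    have hxbd : ∀ x : X, ‖x‖ ≤ 1 → ∀ ε : ℝ, 0 < ε → ∃ d, ‖x - xb d‖ < ε := by
      intro x hx ε hε
      have hxmem : x ∈ Metric.closedBall (0:X) 1 := by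
        rw [Metric.mem_closedBall, dist_zero_right]; exact hx
      obtain ⟨d, hd⟩ := (TopologicalSpace.denseRange_denseSeq
        (Metric.closedBall (0:X) 1)).exists_dist_lt
        (⟨x, hxmem⟩ : Metric.closedBall (0:X) 1) hε
      refine ⟨d, ?_⟩
      rwa [Subtype.dist_eq, dist_eq_norm] at hd
    -- the Polish parameter space
    haveI : PolishSpace ((ℕ → ℕ → X) × (ℕ → ℕ → ℕ)) := by constructor
    letI := TopologicalSpace.upgradeIsCompletelyMetrizable ((ℕ → ℕ → X) × (ℕ → ℕ → ℕ))
    haveI : Nonempty ((ℕ → ℕ → X) × (ℕ → ℕ → ℕ)) := ⟨⟨fun _ _ => 0, fun _ _ => 0⟩⟩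
    set D : ℕ → (ℕ → ℕ → X) × (ℕ → ℕ → ℕ) :=
      TopologicalSpace.denseSeq ((ℕ → ℕ → X) × (ℕ → ℕ → ℕ)) with hD
    have hDd : DenseRange D := TopologicalSpace.denseRange_denseSeq _
    -- the bridge from metric convergence to coordinatewise convergence
    have hbridge : ∀ (u : ℕ → (ℕ → ℕ → X) × (ℕ → ℕ → ℕ)) (p : (ℕ → ℕ → X) × (ℕ → ℕ → ℕ)),
        Tendsto u atTop (𝓝 p) →
        (∀ n d, Tendsto (fun k => (u k).1 n d) atTop (𝓝 (p.1 n d))) ∧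
        (∀ d j, ∀ᶠ k in atTop, (u k).2 d j = p.2 d j) := by
      intro u p hu
      constructor
      · intro n d
        have hc : Continuous fun z : (ℕ → ℕ → X) × (ℕ → ℕ → ℕ) => z.1 n d :=
          (continuous_apply d).comp ((continuous_apply n).comp continuous_fst)
        exact (hc.continuousAt.tendsto).comp hu
      · intro d j
        have hc : Continuous fun z : (ℕ → ℕ → X) × (ℕ → ℕ → ℕ) => z.2 d j :=
          (continuous_apply j).comp ((continuous_apply d).comp continuous_snd)
        have h2 : Tendsto (fun k => (u k).2 d j) atTop (𝓝 (p.2 d j)) :=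
          (hc.continuousAt.tendsto).comp hu
        rw [nhds_discrete] at h2
        exact tendsto_pure.1 h2
    -- closedness and branch hypotheses for the master relation
    have hCcl : ∀ N M : ℕ, ∀ (u : ℕ → (ℕ → ℕ → X) × (ℕ → ℕ → ℕ))
        (p : (ℕ → ℕ → X) × (ℕ → ℕ → ℕ)), (∀ k, u k ∈ CCset xb N M) →
        Tendsto u atTop (𝓝 p) → p ∈ CCset xb N M := by
      intro N M u p hu ht
      obtain ⟨h1, h2⟩ := hbridge u p ht
      exact CC_closed_pure hxbd hu h1 h2
    have hBr : ∀ q : ℝ, 0 < q → ∀ N M : ℕ, ∀ p ∈ CCset xb N M, ∀ s : ℕ → List ℕ,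
        (∀ n, s n ∈ dTr q p.1) → (∀ n, s n <+: s (n + 1)) →
        (∀ n, s n ≠ s (n + 1)) → False := by
      intro q hq N M p hp s hmem hpre hne
      obtain ⟨T, hE, htr⟩ := CC_spec hxb1 hxbd hp
      simp only [htr q] at hmem
      exact h ⟨T, hE, nse_of_chain hq s hmem hpre hne⟩
    have hwf : ∀ (q : ℚ) (N M : ℕ), 0 < q →
        WellFounded (masterRel D (fun p : (ℕ → ℕ → X) × (ℕ → ℕ → ℕ) => dTr (q : ℝ) p.1)
          (CCset xb N M)) := by
      intro q N M hq
      refine masterRel_wf (hCcl N M) ?_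
      intro p hp s h1 h2 h3
      exact hBr (q : ℝ) (by exact_mod_cast hq) N M p hp s h1 h2 h3
    -- the bounding ordinal
    set α : Ordinal := ⨆ z : (ℚ × ℕ × ℕ) × (List ℕ × ℕ × ℚ),
      (rnk (masterRel D (fun p : (ℕ → ℕ → X) × (ℕ → ℕ → ℕ) => dTr ((z.1.1 : ℝ)) p.1)
        (CCset xb z.1.2.1 z.1.2.2)) z.2) + 1 with hαdef
    have hlim : Order.IsSuccLimit ((Cardinal.aleph 1).ord) :=
      Cardinal.isSuccLimit_ord (Cardinal.aleph0_le_aleph 1)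
    have hα : α < (Cardinal.aleph 1).ord := by
      rw [hαdef]
      rw [Cardinal.ord_aleph]
      apply Ordinal.iSup_lt_omega_one
      intro z
      rw [← Cardinal.ord_aleph]
      by_cases hz : WellFounded (masterRel D
          (fun p : (ℕ → ℕ → X) × (ℕ → ℕ → ℕ) => dTr ((z.1.1 : ℝ)) p.1)
          (CCset xb z.1.2.1 z.1.2.2))
      · rw [Ordinal.add_one_eq_succ]
        exact hlim.succ_lt (rnk_lt_omega1 hz z.2)
      · rw [rnk_of_not_wf hz, Ordinal.add_one_eq_succ]
        exact hlim.succ_lt hlim.bot_lt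
    refine ⟨α, hα, ?_⟩
    intro T hT
    have hnse : ¬ NSE T := fun hn => h ⟨T, hT, hn⟩
    refine ⟨hnse, ?_⟩
    intro ε hε
    refine ⟨treeWF_of_not_nse hε hnse, ?_⟩
    obtain ⟨q, hq0, hqε⟩ := exists_rat_btwn hε
    have hq0' : (0 : ℚ) < q := by exact_mod_cast hq0
    have hwfq : WellFounded (treeRel (ergoTree T (q : ℝ))) :=
      wf_treeRel_of_not_nse hq0 hnse
    have step1 : treeHeight (ergoTree T ε) ≤ rnk (treeRel (ergoTree T (q : ℝ))) [] := by
      rw [treeHeight_eq_rnk]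
      refine rnk_le_of_hom hwfq id ?_ []
      rintro a b ⟨ha, hb, hab, hne⟩
      exact ⟨ergoTree_mono hqε.le ha, ergoTree_mono hqε.le hb, hab, hne⟩
    obtain ⟨N, M, p, hpC, htr⟩ := CC_contains hxb1 hxbd T hT
    have hwfm := hwf q N M hq0'
    have hOpen : ∀ s : List ℕ, s ∈ dTr (q : ℝ) p.1 → ∃ δ : ℝ, 0 < δ ∧
        ∀ p' : (ℕ → ℕ → X) × (ℕ → ℕ → ℕ), dist p' p ≤ δ → s ∈ dTr (q : ℝ) p'.1 := by
      intro s hs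
      exact dTr_open (fun z : (ℕ → ℕ → X) × (ℕ → ℕ → ℕ) => z.1)
        (fun n d => (continuous_apply d).comp ((continuous_apply n).comp continuous_fst))
        (q : ℝ) s p hs
    obtain ⟨f, hf⟩ := exists_hom_to_master
      (Tr := fun z : (ℕ → ℕ → X) × (ℕ → ℕ → ℕ) => dTr (q : ℝ) z.1) hDd hpC hOpen
    have step2 : rnk (treeRel (ergoTree T (q : ℝ))) [] ≤
        rnk (masterRel D (fun z : (ℕ → ℕ → X) × (ℕ → ℕ → ℕ) => dTr (q : ℝ) z.1)
          (CCset xb N M)) (f []) := by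
      rw [← htr (q : ℝ)]
      exact rnk_le_of_hom hwfm f hf []
    have step3 : rnk (masterRel D (fun z : (ℕ → ℕ → X) × (ℕ → ℕ → ℕ) => dTr (q : ℝ) z.1)
        (CCset xb N M)) (f []) ≤ α := by
      calc rnk _ (f []) ≤ rnk (masterRel D
            (fun z : (ℕ → ℕ → X) × (ℕ → ℕ → ℕ) => dTr (q : ℝ) z.1)
            (CCset xb N M)) (f []) + 1 := le_self_add
        _ ≤ α := by
            rw [hαdef]
            exact Ordinal.le_iSup (fun z : (ℚ × ℕ × ℕ) × (List ℕ × ℕ × ℚ) =>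
              (rnk (masterRel D (fun p : (ℕ → ℕ → X) × (ℕ → ℕ → ℕ) => dTr ((z.1.1 : ℝ)) p.1)
                (CCset xb z.1.2.1 z.1.2.2)) z.2) + 1) ((q, N, M), f [])
    exact le_trans step1 (le_trans step2 step3)
end

section
/- The left-shift operator S on ℓ¹(ℕ) satisfies condition (NSE); that is, there exist ε > 0 and a strictly increasing sequence (j_p)_{p∈ℕ} of natural numbers such that for every m ∈ ℕ there exists x ∈ ℓ¹(ℕ) with ‖x‖ ≤ 1 and ‖A_{j_p} x − A_{j_{p+1}} x‖ > ε for all p ≤ m, where A_n = (1/n) ∑_{k=0}^{n-1} S^k. (Hence S is not super-ergodic.) -/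
open Filter Topology

/-!
Test `S` on the unit vector `e_N`. For `i ≤ N < i + n`, the window `i, …, i + n - 1`
contains `N`, so `(A_n e_N)_i = 1/n`. If `n ≤ m` and `n ≤ N`, then on the `n` coordinates
`N - n < i ≤ N` the difference `A_n e_N - A_m e_N` equals `1/n - 1/m`, so its norm is at
least `1 - n/m`. With `j_p = 2^p` and `N = 2^m` this is `1/2` for every `p ≤ m`.
-/

open Finset

local notation "ℓ¹" => lp (fun _ : ℕ => ℝ) 1

lemma lp.sum_norm_le_norm_one {α : Type*} {E : α → Type*} [∀ i, NormedAddCommGroup (E i)]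
    (x : lp E 1) (s : Finset α) : ∑ i ∈ s, ‖x i‖ ≤ ‖x‖ := by
  simpa using lp.sum_rpow_le_norm_rpow (p := 1) (by norm_num) x s

lemma lp.sum_range_single_one_add (p : ENNReal) {N q i : ℕ} (hiN : i ≤ N) (hNq : N < i + q) :
    ∑ k ∈ range q, (lp.single p N 1 : lp (fun _ : ℕ => ℝ) p) (i + k) = 1 := by
  have hterm : ∀ k ∈ range q,
      (lp.single p N 1 : lp (fun _ : ℕ => ℝ) p) (i + k) = if k = N - i then 1 else 0 := by
    intro k _
    by_cases hk : k = N - i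
    · rw [if_pos hk, show i + k = N by omega, lp.single_apply_self]
    · rw [if_neg hk, lp.single_apply_ne _ _ _ (by omega)]
  rw [sum_congr rfl hterm, sum_ite_eq' (range q), if_pos (mem_range.mpr (by omega))]

section Shift

variable {S : ℓ¹ →L[ℝ] ℓ¹} (hS : ∀ (x : ℓ¹) (k : ℕ), S x k = x (k + 1))
include hS

lemma shift_pow_apply (k : ℕ) (y : ℓ¹) (i : ℕ) : (S ^ k) y i = y (i + k) := by
  induction k generalizing y i with
  | zero => simp
  | succ k ih => rw [pow_succ, mul_apply_eq_comp, ih, hS, add_assoc]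

lemma cesaroMean_shift_apply (n : ℕ) (y : ℓ¹) (i : ℕ) :
    cesaroMean S n y i = (n : ℝ)⁻¹ * ∑ k ∈ range n, y (i + k) := by
  simp only [cesaroMean, smul_apply, FunLike.coe_sum, Finset.sum_apply, lp.coeFn_smul,
    Pi.smul_apply, smul_eq_mul, lp.coeFn_sum, shift_pow_apply hS]

lemma cesaroMean_shift_single_apply {n N i : ℕ} (hiN : i ≤ N) (hNn : N < i + n) :
    cesaroMean S n (lp.single 1 N 1) i = (n : ℝ)⁻¹ := by
  rw [cesaroMean_shift_apply hS, lp.sum_range_single_one_add 1 hiN hNn, mul_one]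

lemma one_sub_div_le_norm_cesaroMean_shift_sub {n m N : ℕ} (hn : 0 < n) (hnm : n ≤ m)
    (hnN : n ≤ N) :
    1 - (n : ℝ) / m ≤ ‖cesaroMean S n (lp.single 1 N 1) - cesaroMean S m (lp.single 1 N 1)‖ := by
  have hn' : (0 : ℝ) < n := by exact_mod_cast hn
  have hnm' : (n : ℝ) ≤ m := by exact_mod_cast hnm
  have hcoord : ∀ i ∈ Ioc (N - n) N,
      ‖(cesaroMean S n (lp.single 1 N 1) - cesaroMean S m (lp.single 1 N 1)) i‖
        = (n : ℝ)⁻¹ - (m : ℝ)⁻¹ := by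
    intro i hi
    rw [mem_Ioc] at hi
    rw [lp.coeFn_sub, Pi.sub_apply, Real.norm_eq_abs, cesaroMean_shift_single_apply hS hi.2 (by omega),
      cesaroMean_shift_single_apply hS hi.2 (by omega),
      abs_of_nonneg (sub_nonneg.mpr (inv_anti₀ hn' hnm'))]
  calc 1 - (n : ℝ) / m = n * ((n : ℝ)⁻¹ - (m : ℝ)⁻¹) := by field_simp
    _ = ∑ i ∈ Ioc (N - n) N, ‖(cesaroMean S n (lp.single 1 N 1)
          - cesaroMean S m (lp.single 1 N 1)) i‖ := by
        rw [sum_congr rfl hcoord, sum_const, Nat.card_Ioc, Nat.sub_sub_self hnN, nsmul_eq_mul]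
    _ ≤ _ := lp.sum_norm_le_norm_one _ _

end Shift

/-- The left shift `S` on `ℓ¹(ℕ)` satisfies condition (NSE); hence it is not super-ergodic. -/
theorem stmt_15 (S : lp (fun _ : ℕ => ℝ) 1 →L[ℝ] lp (fun _ : ℕ => ℝ) 1)
    (hS : ∀ (x : lp (fun _ : ℕ => ℝ) 1) (k : ℕ), S x k = x (k + 1)) :
    NSE S := by
  refine ⟨1 / 4, by norm_num, fun p => 2 ^ p, pow_right_strictMono₀ one_lt_two, fun m => ?_⟩
  refine ⟨lp.single 1 (2 ^ m) 1, by simp [lp.norm_single], fun p hp => ?_⟩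
  have hbound := one_sub_div_le_norm_cesaroMean_shift_sub hS (pow_pos two_pos p)
    (Nat.pow_le_pow_right two_pos p.le_succ) (Nat.pow_le_pow_right two_pos hp)
  have hhalf : 1 - ((2 ^ p : ℕ) : ℝ) / ((2 ^ (p + 1) : ℕ) : ℝ) = 1 / 2 := by
    push_cast
    field_simp
    ring
  linarith
end
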